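/- arXiv:1612.02160 — 10 statements merged into one kernel-verified Lean document; each statement's English description precedes it below -/
import Mathlib

section
/- Let K be a class of finite simple graphs with bounded expansion, witnessed by constants c_1, c_2, … with wcol_k(G) ≤ c_k for all k and all G ∈ K. Then for every odd positive integer p, every graph G ∈ K satisfies χ(G^[♮p]) ≤ c_{2p-1}; in particular there is a constant C = C(K,p) such that χ(G^[♮p]) ≤ C for all G ∈ K. -/
open SimpleGraph

variable {V : Type*}

/-- The exact distance-`p` graph: distinct vertices adjacent iff their distance in `G` is exactly `p`. -/
def exactDistanceGraph (G : SimpleGraph V) (p : ℕ) : SimpleGraph V where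
  Adj x y := x ≠ y ∧ G.Reachable x y ∧ G.dist x y = p
  symm := by
    constructor
    rintro x y ⟨h1, h2, h3⟩
    exact ⟨h1.symm, h2.symm, by rwa [SimpleGraph.dist_comm]⟩
  loopless := by constructor; rintro x ⟨h1, -, -⟩; exact h1 rfl

/-- `x` is weakly `k`-accessible from `y` w.r.t. the linear order `L`. -/
def WeaklyAccessible (G : SimpleGraph V) (L : LinearOrder V) (k : ℕ) (x y : V) : Prop :=
  L.lt x y ∧ ∃ w : G.Walk x y, w.IsPath ∧ w.length ≤ k ∧
    ∀ z ∈ w.support, z ≠ x → z ≠ y → L.lt x z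

/-- The weak `k`-colouring number. -/
noncomputable def wcol (G : SimpleGraph V) (k : ℕ) : ℕ :=
  1 + sInf { m : ℕ | ∃ L : LinearOrder V, ∀ y : V,
      {x : V | WeaklyAccessible G L k x y}.ncard ≤ m }

/-!
Write `p = 2q + 1` and fix a linear order `L` witnessing `wcol_{4q+1}(G)`. Send every vertex `v`
to the `L`-least vertex `m(v)` of its ball of radius `q`. If `dist(u, v) = 2q + 1`, then
`m(u) ≠ m(v)`, and the walk `m(u) → u → v → m(v)` of length at most `4q + 1` stays above
`min(m(u), m(v))`: a vertex on a shortest `u`–`v` path is within `q` of `u` or of `v`. So the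
smaller of `m(u), m(v)` is weakly `(4q+1)`-accessible from the larger, i.e. `m` is a homomorphism
from `G^[♮p]` into the weak `(4q+1)`-accessibility graph, which greedy colouring along `L`
colours with `wcol_{4q+1}(G)` colours.
-/

namespace SimpleGraph

section Greedy

variable [LinearOrder V] [Finite V] (H : SimpleGraph V)

noncomputable def greedyColor : V → ℕ :=
  wellFounded_lt.fix fun y col => sInf {n | ∀ s (hs : s < y), H.Adj s y → col s hs ≠ n}

theorem greedyColor_eq (y : V) :
    H.greedyColor y = sInf {n | ∀ s < y, H.Adj s y → H.greedyColor s ≠ n} :=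
  wellFounded_lt.fix_eq _ y

theorem exists_le_ncard_forall_greedyColor_ne (y : V) :
    ∃ n ≤ {s | s < y ∧ H.Adj s y}.ncard, ∀ s < y, H.Adj s y → H.greedyColor s ≠ n := by
  classical
  set S := {s | s < y ∧ H.Adj s y}
  have hS : S.Finite := S.toFinite
  have hcard : ((hS.image H.greedyColor).toFinset).card < (Finset.range (S.ncard + 1)).card := by
    rw [Finset.card_range, ← Set.ncard_eq_toFinset_card _]
    exact Nat.lt_succ_of_le (Set.ncard_image_le hS)
  obtain ⟨n, hn, hnS⟩ := Finset.exists_mem_notMem_of_card_lt_card hcard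
  refine ⟨n, Nat.lt_succ_iff.mp (Finset.mem_range.mp hn), fun s hs hadj he => hnS ?_⟩
  exact (hS.image _).mem_toFinset.mpr ⟨s, ⟨hs, hadj⟩, he⟩

theorem greedyColor_le_ncard (y : V) : H.greedyColor y ≤ {s | s < y ∧ H.Adj s y}.ncard := by
  obtain ⟨n, hn, hfree⟩ := H.exists_le_ncard_forall_greedyColor_ne y
  rw [greedyColor_eq]
  exact (Nat.sInf_le (s := {n | ∀ s < y, H.Adj s y → H.greedyColor s ≠ n}) hfree).trans hn

theorem greedyColor_ne {s y : V} (hsy : s < y) (hadj : H.Adj s y) :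
    H.greedyColor s ≠ H.greedyColor y := by
  obtain ⟨n, -, hfree⟩ := H.exists_le_ncard_forall_greedyColor_ne y
  have hmem := Nat.sInf_mem (s := {n | ∀ s < y, H.Adj s y → H.greedyColor s ≠ n}) ⟨n, hfree⟩
  rw [← greedyColor_eq] at hmem
  exact hmem s hsy hadj

theorem colorable_of_forall_ncard_lt {n : ℕ} (h : ∀ y, {s | s < y ∧ H.Adj s y}.ncard < n) :
    H.Colorable n := by
  refine ⟨Coloring.mk (fun y => ⟨H.greedyColor y, (H.greedyColor_le_ncard y).trans_lt (h y)⟩)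
    fun {u v} huv heq => ?_⟩
  replace heq := congrArg Fin.val heq
  rcases lt_or_gt_of_ne huv.ne with huv' | hvu
  · exact H.greedyColor_ne huv' huv heq
  · exact H.greedyColor_ne hvu huv.symm heq.symm

end Greedy

section WeakAccessibility

variable (G : SimpleGraph V) (L : LinearOrder V)

def weakAccessibilityGraph (k : ℕ) : SimpleGraph V where
  Adj x y := WeaklyAccessible G L k x y ∨ WeaklyAccessible G L k y x
  symm := ⟨fun _ _ => Or.symm⟩
  loopless := ⟨fun x hx => by rcases hx with h | h <;> exact (@lt_irrefl V L.toPreorder x) h.1⟩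

theorem exists_linearOrder_forall_ncard_weaklyAccessible_lt_wcol [Finite V] (k : ℕ) :
    ∃ L : LinearOrder V, ∀ y, {x | WeaklyAccessible G L k x y}.ncard < wcol G k := by
  have hne : {m : ℕ | ∃ L : LinearOrder V, ∀ y,
      {x | WeaklyAccessible G L k x y}.ncard ≤ m}.Nonempty := by
    obtain ⟨n, ⟨e⟩⟩ := Finite.exists_equiv_fin V
    exact ⟨Nat.card V, LinearOrder.lift' e e.injective, fun y => Set.ncard_le_card _⟩
  obtain ⟨L, hL⟩ := Nat.sInf_mem hne
  exact ⟨L, fun y => Nat.lt_one_add_iff.mpr (hL y)⟩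

theorem colorable_weakAccessibilityGraph [Finite V] {k n : ℕ}
    (h : ∀ y, {x | WeaklyAccessible G L k x y}.ncard < n) :
    (weakAccessibilityGraph G L k).Colorable n := by
  let _ := L
  refine colorable_of_forall_ncard_lt _ fun y => lt_of_le_of_lt (Set.ncard_le_ncard ?_) (h y)
  rintro x ⟨hxy, hx | hy⟩
  · exact hx
  · exact absurd hy.1 (lt_asymm hxy)

theorem weaklyAccessible_of_walk {k : ℕ} {a b : V} (hab : L.lt a b) (W : G.Walk a b)
    (hW : W.length ≤ k) (hmin : ∀ z ∈ W.support, L.le a z) : WeaklyAccessible G L k a b :=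
  ⟨hab, W.bypass, W.bypass_isPath, W.length_bypass_le_length.trans hW, fun z hz hza _ =>
    (hmin z (W.support_bypass_subset_support hz)).lt_of_ne (Ne.symm hza)⟩

theorem weakAccessibilityGraph_adj_of_walk {k : ℕ} {a b : V} (hab : a ≠ b) (W : G.Walk a b)
    (hW : W.length ≤ k) (hmin : ∀ z ∈ W.support, L.min a b ≤ z) :
    (weakAccessibilityGraph G L k).Adj a b := by
  let _ := L
  rcases lt_or_gt_of_ne hab with hlt | hlt
  · exact .inl (weaklyAccessible_of_walk G L hlt W hW fun z hz => min_eq_left hlt.le ▸ hmin z hz)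
  · refine .inr (weaklyAccessible_of_walk G L hlt W.reverse (W.length_reverse ▸ hW) fun z hz => ?_)
    exact min_eq_right hlt.le ▸ hmin z (by simpa using hz)

end WeakAccessibility

section BallMin

variable [Finite V] (G : SimpleGraph V) (L : LinearOrder V) (q : ℕ)

noncomputable def ballMin (v : V) : V :=
  letI := L
  wellFounded_lt.min {z | ∃ w : G.Walk v z, w.length ≤ q} ⟨v, .nil, Nat.zero_le q⟩

theorem exists_walk_ballMin (v : V) : ∃ w : G.Walk v (ballMin G L q v), w.length ≤ q :=
  letI := L
  wellFounded_lt.min_mem {z | ∃ w : G.Walk v z, w.length ≤ q} _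

theorem ballMin_le {v z : V} (w : G.Walk v z) (hw : w.length ≤ q) : L.le (ballMin G L q v) z :=
  letI := L
  not_lt.mp (wellFounded_lt.not_lt_min {z | ∃ w : G.Walk v z, w.length ≤ q}
    (show z ∈ {z | ∃ w : G.Walk v z, w.length ≤ q} from ⟨w, hw⟩))

theorem ballMin_le_of_mem_support {v y : V} (w : G.Walk v y) (hw : w.length ≤ q) {z : V}
    (hz : z ∈ w.support) : L.le (ballMin G L q v) z :=
  ballMin_le G L q (w.takeUntil z hz) ((w.length_takeUntil_le_length hz).trans hw)

/-- A vertex of the walk is within `q` of one of its ends along it. -/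
theorem min_ballMin_le_of_mem_support {u v : V} (P : G.Walk u v) (hP : P.length ≤ 2 * q + 1)
    {z : V} (hz : z ∈ P.support) : L.min (ballMin G L q u) (ballMin G L q v) ≤ z := by
  let _ := L
  have hsplit := congrArg Walk.length (P.take_spec hz)
  rw [Walk.length_append] at hsplit
  by_cases hu : (P.takeUntil z hz).length ≤ q
  · exact min_le_of_left_le (ballMin_le G L q _ hu)
  · refine min_le_of_right_le (ballMin_le G L q (P.dropUntil z hz).reverse ?_)
    rw [Walk.length_reverse]
    omega

theorem ballMin_ne_of_dist {u v : V} (hd : G.dist u v = 2 * q + 1) :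
    ballMin G L q u ≠ ballMin G L q v := by
  intro heq
  obtain ⟨Ru, hRu⟩ := exists_walk_ballMin G L q u
  obtain ⟨Rv, hRv⟩ := exists_walk_ballMin G L q v
  have := G.dist_le (Ru.append (Rv.reverse.copy heq.symm rfl))
  rw [Walk.length_append, Walk.length_copy, Walk.length_reverse] at this
  omega

noncomputable def ballMinHom :
    exactDistanceGraph G (2 * q + 1) →g weakAccessibilityGraph G L (4 * q + 1) where
  toFun := ballMin G L q
  map_rel' := by
    rintro u v ⟨-, huv, hd⟩
    let _ := L
    obtain ⟨Ru, hRu⟩ := exists_walk_ballMin G L q u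
    obtain ⟨Rv, hRv⟩ := exists_walk_ballMin G L q v
    obtain ⟨P, hP⟩ := huv.exists_walk_length_eq_dist
    refine weakAccessibilityGraph_adj_of_walk G L (ballMin_ne_of_dist G L q hd)
      (Ru.reverse.append (P.append Rv)) ?_ fun z hz => ?_
    · simp only [Walk.length_append, Walk.length_reverse]
      omega
    simp only [Walk.mem_support_append_iff, Walk.support_reverse, List.mem_reverse] at hz
    rcases hz with hz | hz | hz
    · exact min_le_of_left_le (ballMin_le_of_mem_support G L q Ru hRu hz)
    · exact min_ballMin_le_of_mem_support G L q P (hP.trans_le hd.le) hz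
    · exact min_le_of_right_le (ballMin_le_of_mem_support G L q Rv hRv hz)

end BallMin

end SimpleGraph

/-- Theorem 3(a): for a class `K = (𝒦 i)` of finite graphs with bounded expansion, witnessed by
constants `c k` bounding all weak `k`-colouring numbers, and any odd positive `p`, every graph in
the class satisfies `χ(G^[♮p]) ≤ c (2p-1)`; in particular the chromatic number of exact
distance-`p` graphs is bounded by a constant on the class. -/
theorem chromaticNumber_exactDistanceGraph_le_of_boundedExpansion_odd
    {ι : Type*} {Vert : ι → Type*} [∀ i, Fintype (Vert i)]
    (𝒦 : ∀ i, SimpleGraph (Vert i)) (c : ℕ → ℕ)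
    (hbe : ∀ i, ∀ k : ℕ, 1 ≤ k → wcol (𝒦 i) k ≤ c k)
    (p : ℕ) (hp : Odd p) (i : ι) :
    (exactDistanceGraph (𝒦 i) p).chromaticNumber ≤ (c (2 * p - 1) : ℕ∞) := by
  obtain ⟨q, rfl⟩ := hp
  have hk : 2 * (2 * q + 1) - 1 = 4 * q + 1 := by omega
  obtain ⟨L, hL⟩ := exists_linearOrder_forall_ncard_weaklyAccessible_lt_wcol (𝒦 i) (4 * q + 1)
  have hcol := (colorable_weakAccessibilityGraph (𝒦 i) L hL).of_hom (ballMinHom (𝒦 i) L q)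
  rw [hk]
  exact (hcol.mono (hbe i _ (by omega))).chromaticNumber_le
end

section
/- Let K be a class of finite simple graphs with bounded expansion, witnessed by constants c_1, c_2, … with wcol_k(G) ≤ c_k for all k and all G ∈ K, and let p be an odd positive integer. Then every graph G ∈ K with odd girth at least p+1 satisfies χ(G^[♯p]) ≤ (⌊p/2⌋+2)^{c_p}; in particular there is a constant M = M(K,p) such that χ(G^[♯p]) ≤ M for all such G. -/
/-!
Order the vertices by a linear order witnessing `wcol_p G ≤ c` and colour them greedily with `c`
colours so that no vertex shares its colour with a vertex weakly `p`-accessible from it. A vertex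
`v` of `G^[♯p]` is then coloured by its profile: for each greedy colour `j`, the length of a
shortest admissible path from a vertex of colour `j` weakly accessible from `v`, capped at
`⌊p/2⌋ + 1`. Two ends of a path of length `p` get different profiles, by a case analysis on the
position of the smallest vertex of the path, where the odd girth enters through a parity argument.
-/

open SimpleGraph

variable {V : Type*}

/-- The exact `p`-power graph: distinct vertices adjacent iff joined by a path of length exactly `p`. -/
def exactPowerGraph (G : SimpleGraph V) (p : ℕ) : SimpleGraph V where
  Adj x y := x ≠ y ∧ ∃ w : G.Walk x y, w.IsPath ∧ w.length = p
  symm := by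
    constructor
    rintro x y ⟨h1, w, hw, hl⟩
    exact ⟨h1.symm, w.reverse, hw.reverse, by simpa using hl⟩
  loopless := by constructor; rintro x ⟨h1, -⟩; exact h1 rfl

/-- `G` has odd girth at least `m`: no odd cycle of length less than `m`. -/
def OddGirthAtLeast (G : SimpleGraph V) (m : ℕ) : Prop :=
  ∀ (v : V) (c : G.Walk v v), c.IsCycle → Odd c.length → m ≤ c.length

namespace SimpleGraph

theorem Walk.exists_isCycle_odd_length_le {G : SimpleGraph V} {v : V} (W : G.Walk v v)
    (hW : Odd W.length) :
    ∃ (u : V) (c : G.Walk u u), c.IsCycle ∧ Odd c.length ∧ c.length ≤ W.length := by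
  induction hn : W.length using Nat.strong_induction_on generalizing v with
  | _ n ih =>
  subst hn
  cases W with
  | nil => simp at hW
  | @cons _ x _ h W₀ =>
    by_cases hW₀ : W₀.IsPath
    · refine ⟨v, .cons h W₀, Walk.isCycle_iff_isPath_tail_and_le_length.mpr ⟨by simpa, ?_⟩,
        hW, le_rfl⟩
      obtain ⟨k, hk⟩ : Even W₀.length := by simpa [Nat.odd_add_one] using hW
      have : W₀.length ≠ 0 := fun h0 ↦ G.loopless.irrefl _ (Walk.eq_of_length_eq_zero h0 ▸ h)
      simp only [Walk.length_cons]
      omega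
    · obtain ⟨w, c, ⟨r₁, r₂, rfl⟩, hc⟩ : ∃ w, ∃ c : G.Walk w w, c.IsSubwalk W₀ ∧ ¬c.Nil := by
        simpa [Walk.isPath_iff_isSubwalk_imp_nil] using hW₀
      -- cutting `c` out of the walk leaves a shorter closed walk `W'`; `c` or `W'` is odd
      set W' := Walk.cons h (r₁.append r₂)
      have hc₀ : c.length ≠ 0 := mt Walk.length_eq_zero_iff.mp hc
      have hW' : W'.length ≠ 0 := by simp [W']
      have hlen : (Walk.cons h ((r₁.append c).append r₂)).length = W'.length + c.length := by
        simp only [W', Walk.length_cons, Walk.length_append]; omega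
      rw [hlen] at hW ⊢
      rcases Nat.even_or_odd c.length with hce | hco
      · obtain ⟨u, C, hC, hCo, hCl⟩ := ih _ (by omega) W' ((Nat.odd_add.mp hW).mpr hce) rfl
        exact ⟨u, C, hC, hCo, by omega⟩
      · obtain ⟨u, C, hC, hCo, hCl⟩ := ih _ (by omega) c hco rfl
        exact ⟨u, C, hC, hCo, by omega⟩

theorem colorable_of_forall_ncard_lt_s2 [Finite V] [LinearOrder V] (H : SimpleGraph V) {t : ℕ}
    (hH : ∀ v, {u | u < v ∧ H.Adj u v}.ncard < t) : H.Colorable t := by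
  classical
  have : Fintype V := Fintype.ofFinite V
  suffices ∀ F : Finset V, ∃ c : V → Fin t, ∀ v ∈ F, ∀ u < v, H.Adj u v → c u ≠ c v by
    obtain ⟨c, hc⟩ := this Finset.univ
    refine ⟨Coloring.mk c fun {u v} huv ↦ ?_⟩
    rcases lt_or_gt_of_ne huv.ne with h | h
    · exact hc v (Finset.mem_univ _) u h huv
    · exact (hc u (Finset.mem_univ _) v h huv.symm).symm
  intro F
  induction F using Finset.induction_on_max with
  | empty => exact ⟨fun v ↦ ⟨0, by have := hH v; omega⟩, by simp⟩
  | insert a F haF ih =>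
    obtain ⟨c, hc⟩ := ih
    obtain ⟨col, hcol⟩ : ∃ col, col ∉ c '' {u | u < a ∧ H.Adj u a} := by
      by_contra! h
      have := (Set.ncard_image_le (f := c) (Set.toFinite {u | u < a ∧ H.Adj u a})).trans_lt (hH a)
      rw [Set.eq_univ_of_forall h, Set.ncard_univ, Nat.card_fin] at this
      exact this.false
    refine ⟨Function.update c a col, fun v hv u huv hadj ↦ ?_⟩
    rcases Finset.mem_insert.mp hv with rfl | hv
    · rw [Function.update_of_ne huv.ne, Function.update_self]
      exact fun h ↦ hcol ⟨u, ⟨huv, hadj⟩, h⟩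
    · have hva := haF v hv
      rw [Function.update_of_ne (huv.trans hva).ne, Function.update_of_ne hva.ne]
      exact hc v hv u huv hadj

end SimpleGraph

theorem OddGirthAtLeast.even_length {G : SimpleGraph V} {n : ℕ} (hG : OddGirthAtLeast G n)
    {v : V} (W : G.Walk v v) (hW : W.length < n) : Even W.length := by
  by_contra hodd
  obtain ⟨u, c, hc, hco, hcl⟩ := W.exists_isCycle_odd_length_le (Nat.not_even_iff_odd.mp hodd)
  exact absurd (hG u c hc hco) (by omega)

section WeakAccessibility

variable {G : SimpleGraph V} [L : LinearOrder V] {p : ℕ}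

variable (p) in
def IsAccessPath {u v : V} (w : G.Walk u v) : Prop :=
  w.IsPath ∧ w.length ≤ p ∧ ∀ z ∈ w.support, z ≠ u → z ≠ v → u < z

variable (G p) in
noncomputable def accessDist (u v : V) : ℕ :=
  sInf {ℓ | ∃ w : G.Walk u v, IsAccessPath p w ∧ w.length = ℓ}

theorem accessDist_le {u v : V} {w : G.Walk u v} (hw : IsAccessPath p w) :
    accessDist G p u v ≤ w.length :=
  Nat.sInf_le ⟨w, hw, rfl⟩

theorem WeaklyAccessible.exists_isAccessPath_length_eq {u v : V}
    (h : WeaklyAccessible G L p u v) :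
    ∃ w : G.Walk u v, IsAccessPath p w ∧ w.length = accessDist G p u v :=
  Nat.sInf_mem (s := {ℓ | ∃ w : G.Walk u v, IsAccessPath p w ∧ w.length = ℓ})
    ⟨_, h.2.choose, h.2.choose_spec, rfl⟩

theorem WeaklyAccessible.accessDist_pos {u v : V} (h : WeaklyAccessible G L p u v) :
    0 < accessDist G p u v := by
  obtain ⟨w, -, hw⟩ := h.exists_isAccessPath_length_eq
  refine Nat.pos_of_ne_zero fun h0 ↦ ?_
  obtain rfl := Walk.eq_of_length_eq_zero (hw.trans h0)
  exact lt_irrefl u h.1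

theorem isAccessPath_of_forall_le {z x : V} {P : G.Walk z x} (hP : P.IsPath)
    (hlen : P.length ≤ p) (hmin : ∀ w ∈ P.support, z ≤ w) : IsAccessPath p P :=
  ⟨hP, hlen, fun w hw hwz _ ↦ (hmin w hw).lt_of_ne' hwz⟩

theorem weaklyAccessible_of_forall_le {z x : V} {P : G.Walk z x} (hP : P.IsPath)
    (hlen : P.length ≤ p) (hmin : ∀ w ∈ P.support, z ≤ w) (hzx : z ≠ x) :
    WeaklyAccessible G L p z x :=
  ⟨(hmin x P.end_mem_support).lt_of_ne hzx, P,
    isAccessPath_of_forall_le hP hlen hmin⟩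

theorem WeaklyAccessible.of_accessDist_add_le {u w x : V} (hlt : u < w)
    (hu : WeaklyAccessible G L p u x) (hw : WeaklyAccessible G L p w x)
    (hsum : accessDist G p u x + accessDist G p w x ≤ p) :
    WeaklyAccessible G L p u w := by
  classical
  obtain ⟨P₁, ⟨-, -, hP₁⟩, hP₁len⟩ := hu.exists_isAccessPath_length_eq
  obtain ⟨P₂, ⟨-, -, hP₂⟩, hP₂len⟩ := hw.exists_isAccessPath_length_eq
  refine ⟨hlt, (P₁.append P₂.reverse).bypass, Walk.bypass_isPath _, ?_, fun z hz hzu hzw ↦ ?_⟩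
  · calc (P₁.append P₂.reverse).bypass.length ≤ (P₁.append P₂.reverse).length :=
          Walk.length_bypass_le_length _
      _ ≤ p := by rw [Walk.length_append, Walk.length_reverse]; omega
  · obtain rfl | hzx := eq_or_ne z x
    · exact hu.1
    rcases (Walk.mem_support_append_iff _ _).mp (Walk.support_bypass_subset_support _ hz) with
      hz | hz
    · exact hP₁ z hz hzu hzx
    · exact hlt.trans (hP₂ z (by simpa using hz) hzw hzx)

variable {α : Type*} (s : V → α) (m : ℕ) {u v : V}

variable (G p) in
/-- The value `0` (the infimum of `∅`) marks colours of which no vertex is weakly accessible, as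
`accessDist` is positive on weakly accessible pairs. -/
noncomputable def accessProfile (v : V) (j : α) : ℕ :=
  sInf ((fun u ↦ min (accessDist G p u v) (m + 1)) '' {u | WeaklyAccessible G L p u v ∧ s u = j})

theorem accessProfile_lt (v : V) (j : α) : accessProfile G p s m v j < m + 2 := by
  rcases Set.eq_empty_or_nonempty {u | WeaklyAccessible G L p u v ∧ s u = j} with h | ⟨u, hu⟩
  · simp [accessProfile, h]
  · exact Nat.lt_succ_of_le ((Nat.sInf_le (Set.mem_image_of_mem _ hu)).trans (min_le_right _ _))

theorem accessProfile_eq_zero_iff {v : V} {j : α} :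
    accessProfile G p s m v j = 0 ↔ ∀ u, WeaklyAccessible G L p u v → s u ≠ j := by
  refine Nat.sInf_eq_zero.trans ⟨?_, fun h ↦ Or.inr ?_⟩
  · rintro (⟨u, ⟨hu, -⟩, h0⟩ | h) w hw rfl
    · have := hu.accessDist_pos
      simp only at h0
      omega
    · exact (Set.image_eq_empty.mp h).subset ⟨hw, rfl⟩
  · exact Set.image_eq_empty.mpr (Set.eq_empty_of_forall_notMem fun u hu ↦ h u hu.1 hu.2)

theorem WeaklyAccessible.accessProfile_le (h : WeaklyAccessible G L p u v) :
    accessProfile G p s m v (s u) ≤ accessDist G p u v :=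
  calc accessProfile G p s m v (s u) ≤ min (accessDist G p u v) (m + 1) :=
        Nat.sInf_le ⟨u, ⟨h, rfl⟩, rfl⟩
    _ ≤ accessDist G p u v := min_le_left _ _

theorem WeaklyAccessible.exists_accessProfile_eq (h : WeaklyAccessible G L p u v) :
    ∃ u', WeaklyAccessible G L p u' v ∧ s u' = s u ∧
      min (accessDist G p u' v) (m + 1) = accessProfile G p s m v (s u) := by
  obtain ⟨u', ⟨hu', hsu'⟩, heq⟩ :=
    Nat.sInf_mem (s := (fun u' ↦ min (accessDist G p u' v) (m + 1)) ''
      {u' | WeaklyAccessible G L p u' v ∧ s u' = s u}) ⟨_, Set.mem_image_of_mem _ ⟨h, rfl⟩⟩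
  exact ⟨u', hu', hsu', heq⟩

theorem WeaklyAccessible.accessDist_eq_accessProfile
    (hs : ∀ u v, WeaklyAccessible G L p u v → s u ≠ s v) {z : V}
    (h : WeaklyAccessible G L p z v) (hm : accessProfile G p s m v (s z) ≤ m)
    (hsum : accessProfile G p s m v (s z) + accessDist G p z v ≤ p) :
    accessDist G p z v = accessProfile G p s m v (s z) := by
  obtain ⟨u, hu, hsu, hmin⟩ := h.exists_accessProfile_eq s m
  have hdu : accessDist G p u v = accessProfile G p s m v (s z) := by omega
  obtain rfl | hne := eq_or_ne u z
  · exact hdu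
  rcases hne.lt_or_gt with hlt | hlt
  · exact absurd hsu (hs u z (hu.of_accessDist_add_le hlt h (by omega)))
  · exact absurd hsu.symm (hs z u (h.of_accessDist_add_le hlt hu (by omega)))

end WeakAccessibility

section Properness

variable {G : SimpleGraph V} [L : LinearOrder V] {p m : ℕ} {α : Type*} {s : V → α}

theorem accessProfile_ne_of_forall_start_le (hs : ∀ u v, WeaklyAccessible G L p u v → s u ≠ s v)
    {x y : V} {P : G.Walk x y} (hP : P.IsPath) (hlen : P.length ≤ p)
    (hmin : ∀ w ∈ P.support, x ≤ w) (hxy : x ≠ y) :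
    accessProfile G p s m x ≠ accessProfile G p s m y := by
  intro h
  have h0 : accessProfile G p s m x (s x) = 0 :=
    (accessProfile_eq_zero_iff s m).mpr fun u hu ↦ hs u x hu
  rw [h, accessProfile_eq_zero_iff] at h0
  exact h0 x (weaklyAccessible_of_forall_le hP hlen hmin hxy) rfl

/-- The minimum `z` of a path of odd length `p` splits it into a short part `Px` and a long part
`Py`. Equal profiles at `x` and `y` would force both `x` and `y` to see their nearest vertex of
colour `s z` at the same distance `d` (attained at `z`), and the two closed walks of lengths
`d + |Px|` and `d + |Py|` through `z` are at most `p` long, hence even: so `|Px| + |Py|` is even. -/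
theorem accessProfile_ne_of_interior_min (hG : OddGirthAtLeast G (2 * m + 1 + 1))
    (hs : ∀ u v, WeaklyAccessible G L (2 * m + 1) u v → s u ≠ s v)
    {x y z : V} {Px : G.Walk z x} {Py : G.Walk z y} (hPx : Px.IsPath) (hPy : Py.IsPath)
    (hminx : ∀ w ∈ Px.support, z ≤ w) (hminy : ∀ w ∈ Py.support, z ≤ w) (hzx : z ≠ x)
    (hzy : z ≠ y) (hlt : Px.length < Py.length) (hsum : Px.length + Py.length = 2 * m + 1) :
    accessProfile G (2 * m + 1) s m x ≠ accessProfile G (2 * m + 1) s m y := by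
  intro h
  have hax : WeaklyAccessible G L (2 * m + 1) z x :=
    weaklyAccessible_of_forall_le hPx (by omega) hminx hzx
  have hay : WeaklyAccessible G L (2 * m + 1) z y :=
    weaklyAccessible_of_forall_le hPy (by omega) hminy hzy
  have hdx : accessDist G (2 * m + 1) z x ≤ Px.length :=
    accessDist_le (isAccessPath_of_forall_le hPx (by omega) hminx)
  have hdy : accessDist G (2 * m + 1) z y ≤ Py.length :=
    accessDist_le (isAccessPath_of_forall_le hPy (by omega) hminy)
  have hpx := hax.accessProfile_le s m
  have hx := hax.accessDist_eq_accessProfile s m hs (by omega) (by omega)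
  rw [h] at hpx hx
  have hy := hay.accessDist_eq_accessProfile s m hs (by omega) (by omega)
  obtain ⟨Rx, -, hRx⟩ := hax.exists_isAccessPath_length_eq
  obtain ⟨Ry, -, hRy⟩ := hay.exists_isAccessPath_length_eq
  have hlx : (Rx.append Px.reverse).length = Rx.length + Px.length := by simp
  have hly : (Ry.append Py.reverse).length = Ry.length + Py.length := by simp
  obtain ⟨k, hk⟩ := hG.even_length (Rx.append Px.reverse) (by omega)
  obtain ⟨l, hl⟩ := hG.even_length (Ry.append Py.reverse) (by omega)
  omega

theorem accessProfile_ne_of_adj (hG : OddGirthAtLeast G (2 * m + 1 + 1))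
    (hs : ∀ u v, WeaklyAccessible G L (2 * m + 1) u v → s u ≠ s v) {x y : V}
    (hxy : (exactPowerGraph G (2 * m + 1)).Adj x y) :
    accessProfile G (2 * m + 1) s m x ≠ accessProfile G (2 * m + 1) s m y := by
  classical
  obtain ⟨hxy, P, hP, hlen⟩ := hxy
  obtain ⟨z, hz, hmin⟩ := P.support.toFinset.exists_min_image id ⟨x, by simp⟩
  simp only [List.mem_toFinset, id] at hz hmin
  obtain rfl | hzx := eq_or_ne z x
  · exact accessProfile_ne_of_forall_start_le hs hP hlen.le hmin hxy
  obtain rfl | hzy := eq_or_ne z y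
  · exact (accessProfile_ne_of_forall_start_le hs hP.reverse (by simp [hlen])
      (by simpa using hmin) hxy.symm).symm
  have hsplit := congrArg Walk.length (P.take_spec hz)
  rw [Walk.length_append] at hsplit
  have hminx : ∀ w ∈ (P.takeUntil z hz).reverse.support, z ≤ w := fun w hw ↦
    hmin w (P.support_takeUntil_subset_support hz (by simpa using hw))
  have hminy : ∀ w ∈ (P.dropUntil z hz).support, z ≤ w := fun w hw ↦
    hmin w (P.support_dropUntil_subset_support hz hw)
  rcases Nat.lt_or_gt_of_ne (a := (P.takeUntil z hz).length) (b := (P.dropUntil z hz).length)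
    (by omega) with hlt | hgt
  · exact accessProfile_ne_of_interior_min hG hs (hP.takeUntil hz).reverse (hP.dropUntil hz)
      hminx hminy hzx hzy (by simpa using hlt) (by simp; omega)
  · exact (accessProfile_ne_of_interior_min hG hs (hP.dropUntil hz) (hP.takeUntil hz).reverse
      hminy hminx hzy hzx (by simpa using hgt) (by simp; omega)).symm

end Properness

theorem exists_linearOrder_ncard_lt_of_wcol_le [Finite V] {G : SimpleGraph V} {k c : ℕ}
    (h : wcol G k ≤ c) : ∃ L : LinearOrder V, ∀ y, {x | WeaklyAccessible G L k x y}.ncard < c := by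
  have hne : {n : ℕ | ∃ L : LinearOrder V, ∀ y : V,
      {x : V | WeaklyAccessible G L k x y}.ncard ≤ n}.Nonempty :=
    ⟨Nat.card V, LinearOrder.lift' _ (Finite.equivFin V).injective, fun _ ↦ Set.ncard_le_card _⟩
  obtain ⟨L, hL⟩ := Nat.sInf_mem hne
  exact ⟨L, fun y ↦ (hL y).trans_lt (by rw [wcol] at h; omega)⟩

theorem colorable_fromRel_weaklyAccessible [Finite V] {G : SimpleGraph V} [L : LinearOrder V]
    {k c : ℕ} (h : ∀ y, {x | WeaklyAccessible G L k x y}.ncard < c) :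
    (SimpleGraph.fromRel (WeaklyAccessible G L k)).Colorable c :=
  colorable_of_forall_ncard_lt_s2 _ fun v ↦ by
    refine (Set.ncard_le_ncard (fun u hu ↦ ?_) (Set.toFinite _)).trans_lt (h v)
    obtain ⟨huv, -, huv' | hvu⟩ := hu
    exacts [huv', absurd hvu.1 huv.not_gt]

theorem colorable_exactPowerGraph {G : SimpleGraph V} [L : LinearOrder V] {m : ℕ}
    {α : Type*} [Fintype α] (hG : OddGirthAtLeast G (2 * m + 1 + 1))
    (C : (SimpleGraph.fromRel (WeaklyAccessible G L (2 * m + 1))).Coloring α) :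
    (exactPowerGraph G (2 * m + 1)).Colorable ((m + 2) ^ Fintype.card α) := by
  classical
  have hs : ∀ u v, WeaklyAccessible G L (2 * m + 1) u v → C u ≠ C v := fun u v h ↦
    C.valid ((SimpleGraph.fromRel_adj _ _ _).mpr ⟨h.1.ne, Or.inl h⟩)
  let C' : (exactPowerGraph G (2 * m + 1)).Coloring (α → Fin (m + 2)) :=
    Coloring.mk (fun v j ↦ ⟨accessProfile G (2 * m + 1) C m v j, accessProfile_lt C m v j⟩)
      fun hxy h ↦ accessProfile_ne_of_adj hG hs hxy
        (funext fun j ↦ congrArg Fin.val (congrFun h j))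
  simpa using C'.colorable

/-- Theorem 4: for a class `K = (𝒦 i)` of finite graphs with bounded expansion, witnessed by
constants `c k` bounding all weak `k`-colouring numbers, and any odd positive `p`, every graph in
the class with odd girth at least `p+1` satisfies `χ(G^[♯p]) ≤ (⌊p/2⌋+2) ^ (c p)`; in particular
the chromatic number of exact `p`-power graphs is bounded by a constant on the class. -/
theorem chromaticNumber_exactPowerGraph_le_of_boundedExpansion
    {ι : Type*} {Vert : ι → Type*} [∀ i, Fintype (Vert i)]
    (𝒦 : ∀ i, SimpleGraph (Vert i)) (c : ℕ → ℕ)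
    (hbe : ∀ i, ∀ k : ℕ, 1 ≤ k → wcol (𝒦 i) k ≤ c k)
    (p : ℕ) (hp : Odd p) (i : ι) (hgirth : OddGirthAtLeast (𝒦 i) (p + 1)) :
    (exactPowerGraph (𝒦 i) p).chromaticNumber ≤ (((p / 2 + 2) ^ (c p) : ℕ) : ℕ∞) := by
  obtain ⟨m, rfl⟩ := hp
  obtain ⟨L, hL⟩ := exists_linearOrder_ncard_lt_of_wcol_le (hbe i (2 * m + 1) (by omega))
  obtain ⟨C⟩ := colorable_fromRel_weaklyAccessible (L := L) hL
  rw [show (2 * m + 1) / 2 = m by omega]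
  simpa using (colorable_exactPowerGraph (L := L) hgirth C).chromaticNumber_le
end

section
/- For every odd positive integer p and every finite simple graph G, the chromatic number of the exact distance-p graph of G is at most the weak (2p−1)-colouring number of G, i.e. χ(G^[♮p]) ≤ wcol_{2p−1}(G). -/
/-!
Fix an ordering `L` attaining `wcol_{2p-1}(G)` and colour greedily along `L`, giving each vertex a
colour different from those of all vertices weakly `(2p-1)`-accessible from it; this uses
`wcol_{2p-1}(G)` colours. Write `p = 2q + 1` and give each vertex `v` the colour of the `L`-least
vertex `m(v)` of its radius-`q` ball. If `dist(u, v) = p` the two balls are disjoint, so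
`m(u) ≠ m(v)`, and walking from the smaller of them through its ball, along a shortest `u`-`v`
path and through the other ball reaches the larger one in at most `4q + 1 = 2p - 1` steps without
passing below the start: the two minima are weakly accessible from each other, hence coloured
differently.
-/

open SimpleGraph

variable {V : Type*}

theorem exists_fin_coloring_of_wellFounded {α : Type*} {r : α → α → Prop}
    (hr : WellFounded r) {n : ℕ} (hfin : ∀ y, {x | r x y}.Finite) (hcard : ∀ y, {x | r x y}.ncard < n) :
    ∃ c : α → Fin n, ∀ ⦃x y⦄, r x y → c x ≠ c y := by
  have hfree : ∀ y (f : ∀ x, r x y → Fin n), ∃ i, ∀ x h, f x h ≠ i := by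
    intro y f
    have := (hfin y).to_subtype
    have hrange : (Set.range fun x : {x | r x y} => f x x.2).ncard < n :=
      calc _ = Nat.card (Set.range fun x : {x | r x y} => f x x.2) :=
            (Nat.card_coe_set_eq _).symm
        _ ≤ Nat.card {x | r x y} := Finite.card_range_le _
        _ = {x | r x y}.ncard := Nat.card_coe_set_eq _
        _ < n := hcard y
    obtain ⟨i, hi⟩ : ∃ i, i ∉ Set.range fun x : {x | r x y} => f x x.2 := by
      by_contra! h
      rw [Set.eq_univ_of_forall h, Set.ncard_univ, Nat.card_eq_fintype_card,
        Fintype.card_fin] at hrange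
      exact lt_irrefl n hrange
    exact ⟨i, fun x h hx => hi ⟨⟨x, h⟩, hx⟩⟩
  choose pick hpick using hfree
  refine ⟨hr.fix pick, fun x y hxy => ?_⟩
  rw [hr.fix_eq pick y]
  exact hpick y (fun x _ => hr.fix pick x) x hxy

theorem wellFounded_weaklyAccessible [Finite V] (G : SimpleGraph V) (L : LinearOrder V) (k : ℕ) :
    WellFounded (WeaklyAccessible G L k) :=
  letI := L
  Subrelation.wf (fun h => h.1) wellFounded_lt

theorem exists_linearOrder_forall_ncard_lt_wcol [Finite V] (G : SimpleGraph V) (k : ℕ) :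
    ∃ L : LinearOrder V, ∀ y, {x | WeaklyAccessible G L k x y}.ncard < wcol G k := by
  have hne : {m : ℕ | ∃ L : LinearOrder V, ∀ y : V,
      {x : V | WeaklyAccessible G L k x y}.ncard ≤ m}.Nonempty :=
    ⟨Nat.card V, LinearOrder.lift' _ (Finite.equivFin V).injective,
      fun _ => Set.ncard_le_card _⟩
  obtain ⟨L, hL⟩ := Nat.sInf_mem hne
  exact ⟨L, fun y => (hL y).trans_lt (Nat.lt_one_add_iff.mpr le_rfl)⟩

namespace SimpleGraph

variable {G : SimpleGraph V}

theorem mem_ball_add_one_iff {u z : V} {q : ℕ} :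
    z ∈ G.ball u (q + 1) ↔ ∃ w : G.Walk u z, w.length ≤ q := by
  constructor
  · intro h
    have hlt : G.edist z u < q + 1 := h
    obtain ⟨w, hw⟩ :=
      (reachable_of_edist_ne_top (hlt.trans_le le_top).ne).exists_walk_length_eq_edist
    refine ⟨w.reverse, ?_⟩
    rw [ENat.lt_add_one_iff (ENat.natCast_ne_top q), ← hw] at hlt
    simpa using hlt
  · rintro ⟨w, hw⟩
    calc G.edist z u ≤ w.reverse.length := edist_le _
      _ ≤ q := by simpa using hw
      _ < q + 1 := ENat.lt_add_one_iff (ENat.natCast_ne_top q) |>.mpr le_rfl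

theorem Walk.mem_ball_of_mem_support {u v z : V} {q : ℕ} (w : G.Walk u v) (hw : w.length ≤ q)
    (hz : z ∈ w.support) : z ∈ G.ball u (q + 1) := by
  classical
  exact mem_ball_add_one_iff.mpr ⟨w.takeUntil z hz, (w.length_takeUntil_le_length hz).trans hw⟩

theorem Walk.mem_ball_or_mem_ball_of_mem_support {u v z : V} {q : ℕ} (w : G.Walk u v)
    (hw : w.length ≤ 2 * q + 1) (hz : z ∈ w.support) :
    z ∈ G.ball u (q + 1) ∨ z ∈ G.ball v (q + 1) := by
  classical
  have hsum : (w.takeUntil z hz).length + (w.dropUntil z hz).length = w.length := by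
    rw [← Walk.length_append, w.take_spec hz]
  rw [mem_ball_add_one_iff, mem_ball_add_one_iff]
  by_cases h : (w.takeUntil z hz).length ≤ q
  · exact .inl ⟨_, h⟩
  · exact .inr ⟨(w.dropUntil z hz).reverse, by rw [Walk.length_reverse]; omega⟩

theorem dist_le_of_mem_ball_of_mem_ball {u v z : V} {q : ℕ} (hu : z ∈ G.ball u (q + 1))
    (hv : z ∈ G.ball v (q + 1)) : G.dist u v ≤ 2 * q := by
  obtain ⟨wu, hwu⟩ := mem_ball_add_one_iff.mp hu
  obtain ⟨wv, hwv⟩ := mem_ball_add_one_iff.mp hv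
  calc G.dist u v ≤ (wu.append wv.reverse).length := dist_le _
    _ ≤ 2 * q := by rw [Walk.length_append, Walk.length_reverse]; omega

theorem exists_isLeast_ball [Finite V] [LinearOrder V] (G : SimpleGraph V) (v : V) {r : ℕ∞}
    (hr : 0 < r) : ∃ a, IsLeast (G.ball v r) a := by
  obtain ⟨a, ha, hmin⟩ := Set.exists_min_image _ id (Set.toFinite _) ⟨v, mem_ball_self hr⟩
  exact ⟨a, ha, hmin⟩

end SimpleGraph

section WeakAccessibility

variable [LinearOrder V] {G : SimpleGraph V}

theorem weaklyAccessible_of_walk {k : ℕ} {x y : V} (hxy : x < y) (w : G.Walk x y)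
    (hw : w.length ≤ k) (hmin : ∀ z ∈ w.support, x ≤ z) :
    WeaklyAccessible G ‹_› k x y := by
  classical
  exact ⟨hxy, w.bypass, w.bypass_isPath, w.length_bypass_le_length.trans hw,
    fun z hz hzx _ => (hmin z (w.support_bypass_subset_support hz)).lt_of_ne' hzx⟩

/-- Going from `a` to `u`, along `P` to `v`, then to `b` stays inside the two balls, since every
vertex of `P` is within `q` of one of its ends; so no vertex on the way is below `a`. -/
theorem weaklyAccessible_of_isLeast_ball {q : ℕ} {u v a b : V} (P : G.Walk u v)
    (hP : P.length ≤ 2 * q + 1) (ha : IsLeast (G.ball u (q + 1)) a)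
    (hb : IsLeast (G.ball v (q + 1)) b) (hab : a < b) :
    WeaklyAccessible G ‹_› (4 * q + 1) a b := by
  obtain ⟨wa, hwa⟩ := mem_ball_add_one_iff.mp ha.1
  obtain ⟨wb, hwb⟩ := mem_ball_add_one_iff.mp hb.1
  refine weaklyAccessible_of_walk hab (wa.reverse.append (P.append wb)) ?_ fun z hz => ?_
  · simp only [Walk.length_append, Walk.length_reverse]
    omega
  have hu : z ∈ G.ball u (q + 1) → a ≤ z := fun h => ha.2 h
  have hv : z ∈ G.ball v (q + 1) → a ≤ z := fun h => hab.le.trans (hb.2 h)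
  simp only [Walk.mem_support_append_iff, Walk.support_reverse, List.mem_reverse] at hz
  rcases hz with hz | hz | hz
  · exact hu (wa.mem_ball_of_mem_support hwa hz)
  · exact (P.mem_ball_or_mem_ball_of_mem_support hP hz).elim hu hv
  · exact hv (wb.mem_ball_of_mem_support hwb hz)

theorem weaklyAccessible_or_of_exactDistanceGraph_adj {q : ℕ} {u v a b : V}
    (huv : (exactDistanceGraph G (2 * q + 1)).Adj u v) (ha : IsLeast (G.ball u (q + 1)) a)
    (hb : IsLeast (G.ball v (q + 1)) b) :
    WeaklyAccessible G ‹_› (4 * q + 1) a b ∨ WeaklyAccessible G ‹_› (4 * q + 1) b a := by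
  obtain ⟨-, hreach, hdist⟩ := huv
  obtain ⟨P, hP⟩ := hreach.exists_walk_length_eq_dist
  have hab : a ≠ b := by
    rintro rfl
    have := dist_le_of_mem_ball_of_mem_ball ha.1 hb.1
    omega
  rcases hab.lt_or_gt with hab | hba
  · exact .inl (weaklyAccessible_of_isLeast_ball P (by omega) ha hb hab)
  · have hP' : P.reverse.length ≤ 2 * q + 1 := by rw [Walk.length_reverse]; omega
    exact .inr (weaklyAccessible_of_isLeast_ball P.reverse hP' hb ha hba)

end WeakAccessibility

/-- Theorem 10(a): for odd positive `p` and any finite graph `G`,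
`χ(G^[♮p]) ≤ wcol_{2p-1}(G)`. -/
theorem chromaticNumber_exactDistanceGraph_le_wcol_odd
    [Fintype V] (G : SimpleGraph V) (p : ℕ) (hp : Odd p) :
    (exactDistanceGraph G p).chromaticNumber ≤ (wcol G (2 * p - 1) : ℕ∞) := by
  obtain ⟨q, rfl⟩ := hp
  rw [show 2 * (2 * q + 1) - 1 = 4 * q + 1 by omega]
  obtain ⟨L, hL⟩ := exists_linearOrder_forall_ncard_lt_wcol G (4 * q + 1)
  obtain ⟨c, hc⟩ := exists_fin_coloring_of_wellFounded (wellFounded_weaklyAccessible G L _)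
    (fun _ => Set.toFinite _) hL
  let _ : LinearOrder V := L
  choose m hm using fun v => G.exists_isLeast_ball v (r := q + 1) (by simp)
  refine Colorable.chromaticNumber_le ⟨Coloring.mk (c ∘ m) fun {u v} huv => ?_⟩
  rcases weaklyAccessible_or_of_exactDistanceGraph_adj huv (hm u) (hm v) with h | h
  exacts [hc h, (hc h).symm]
end

section
/- Let p be an odd positive integer, let G be a finite simple graph, and set q = wcol_p(G). Let H be the graph on the vertex set of G in which two distinct vertices x, y are adjacent if and only if the distance between x and y in G is odd and at most p (i.e. H = G^[♮1] ∪ G^[♮3] ∪ ⋯ ∪ G^[♮p]). Then χ(H) ≤ (⌊p/2⌋+2)^q. -/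
open SimpleGraph

variable {V : Type*}

/-!
Fix an order witnessing `wcol_p(G) = q`, and let `distAbove z y` be the length of a shortest
`z`–`y` walk through vertices `≥ z`. Call `z ≠ z'` in conflict if
`distAbove z y + distAbove z' y ≤ p` for some `y`; the smaller of the two is then weakly
`p`-accessible from the larger, so greedy colouring along the order splits the vertices into `q`
conflict-free classes. Colour `y` by the vector that records, for each class, the least
`distAbove z y` over its members `z`, capped at `⌊p/2⌋ + 1`. If `dist x y` is odd and at most `p`,
the least vertex `z` of a shortest `x`–`y` path has `distAbove z x + distAbove z y = dist x y`, so
the two summands differ, say `a < b`. In the class of `z` the entry of `x` is then exactly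
`a ≤ ⌊p/2⌋`, while that of `y` exceeds `a`.
-/

namespace SimpleGraph

theorem colorable_of_forall_ncard_lt_s9 [LinearOrder V] [Finite V] (K : SimpleGraph V) (n : ℕ)
    (h : ∀ y, {x | x < y ∧ K.Adj x y}.ncard < n) : K.Colorable n := by
  let lower : V → Set V := fun y => {x | x < y ∧ K.Adj x y}
  let f : V → ℕ := wellFounded_lt.fix fun y rec =>
    sInf {c | ∀ x (hx : x < y), K.Adj x y → rec x hx ≠ c}
  have hf : ∀ y, f y = sInf (f '' lower y)ᶜ := fun y => by
    refine (wellFounded_lt.fix_eq _ y).trans (congrArg sInf ?_)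
    ext c
    simp [lower, f]
  have hf_mem : ∀ y, f y ∈ (f '' lower y)ᶜ := fun y =>
    hf y ▸ Nat.sInf_mem (Set.toFinite _).infinite_compl.nonempty
  refine (colorable_iff_exists_bdd_nat_coloring n).2
    ⟨Coloring.mk f fun {x y} hxy => ?_, fun y => ?_⟩
  · rcases lt_or_gt_of_ne hxy.ne with hlt | hlt
    · exact fun he => hf_mem y ⟨x, ⟨hlt, hxy⟩, he⟩
    · exact fun he => hf_mem x ⟨y, ⟨hlt, hxy.symm⟩, he.symm⟩
  · show f y < n
    by_contra! hle
    have hsub : Set.Iio n ⊆ f '' lower y := fun c hc => by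
      by_contra hc'
      have hfc : f y ≤ c := hf y ▸ Nat.sInf_le hc'
      exact (Set.mem_Iio.1 hc).not_ge (hle.trans hfc)
    have := (Set.ncard_le_ncard hsub (Set.toFinite _)).trans (Set.ncard_image_le (Set.toFinite _))
    simp only [Set.ncard_Iio_nat] at this
    exact (h y).not_ge this

section DistAbove

variable [LinearOrder V] {G : SimpleGraph V}

def Walk.StartsAtMin {z y : V} (w : G.Walk z y) : Prop :=
  ∀ v ∈ w.support, z ≤ v

variable (G) in
def ReachableAbove (z y : V) : Prop :=
  ∃ w : G.Walk z y, w.StartsAtMin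

variable (G) in
/-- `0` when `¬ G.ReachableAbove z y`. -/
noncomputable def distAbove (z y : V) : ℕ :=
  sInf {n | ∃ w : G.Walk z y, w.StartsAtMin ∧ w.length = n}

theorem distAbove_le_length {z y : V} {w : G.Walk z y} (hw : w.StartsAtMin) :
    G.distAbove z y ≤ w.length :=
  Nat.sInf_le ⟨w, hw, rfl⟩

theorem ReachableAbove.exists_walk_length_eq_distAbove {z y : V} (h : G.ReachableAbove z y) :
    ∃ w : G.Walk z y, w.StartsAtMin ∧ w.length = G.distAbove z y := by
  obtain ⟨w, hw⟩ := h
  exact Nat.sInf_mem (s := {n | ∃ w : G.Walk z y, w.StartsAtMin ∧ w.length = n}) ⟨_, w, hw, rfl⟩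

theorem ReachableAbove.dist_le_distAbove_add {z x y : V} (hx : G.ReachableAbove z x)
    (hy : G.ReachableAbove z y) : G.dist x y ≤ G.distAbove z x + G.distAbove z y := by
  obtain ⟨wx, -, hwx⟩ := hx.exists_walk_length_eq_distAbove
  obtain ⟨wy, -, hwy⟩ := hy.exists_walk_length_eq_distAbove
  simpa [hwx, hwy] using dist_le (wx.reverse.append wy)

theorem Reachable.exists_distAbove_add_distAbove_eq_dist {x y : V} (h : G.Reachable x y) :
    ∃ z, G.ReachableAbove z x ∧ G.ReachableAbove z y ∧
      G.distAbove z x + G.distAbove z y = G.dist x y := by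
  classical
  obtain ⟨w, hw⟩ := h.exists_walk_length_eq_dist
  -- split a shortest path at its least vertex
  have hne : w.support ≠ [] := w.support_ne_nil
  set z := w.support.min hne
  have hz : z ∈ w.support := List.min_mem hne
  have hmin : ∀ v ∈ w.support, z ≤ v := fun v hv => List.min_le_of_mem hv
  have h₁ : (w.takeUntil z hz).reverse.StartsAtMin := fun v hv =>
    hmin v (w.support_takeUntil_subset_support hz (by simpa using hv))
  have h₂ : (w.dropUntil z hz).StartsAtMin := fun v hv =>
    hmin v (w.support_dropUntil_subset_support hz hv)
  have hx : G.ReachableAbove z x := ⟨_, h₁⟩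
  have hy : G.ReachableAbove z y := ⟨_, h₂⟩
  refine ⟨z, hx, hy, le_antisymm ?_ (hx.dist_le_distAbove_add hy)⟩
  calc G.distAbove z x + G.distAbove z y
      ≤ (w.takeUntil z hz).reverse.length + (w.dropUntil z hz).length :=
        add_le_add (distAbove_le_length h₁) (distAbove_le_length h₂)
    _ = G.dist x y := by rw [Walk.length_reverse, ← Walk.length_append, w.take_spec, hw]

theorem weaklyAccessible_of_startsAtMin {k : ℕ} {z y : V} (hzy : z ≠ y) {w : G.Walk z y}
    (hw : w.StartsAtMin) (hk : w.length ≤ k) : WeaklyAccessible G ‹_› k z y :=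
  ⟨(hw y w.end_mem_support).lt_of_ne hzy, w.bypass, w.bypass_isPath,
    w.length_bypass_le_length.trans hk,
    fun v hv hvz _ => (hw v (w.support_bypass_subset_support hv)).lt_of_ne' hvz⟩

end DistAbove

theorem exists_linearOrder_forall_ncard_weaklyAccessible_lt [Finite V] (G : SimpleGraph V)
    (k : ℕ) : ∃ L : LinearOrder V, ∀ y, {x | WeaklyAccessible G L k x y}.ncard < wcol G k := by
  have hne :
      {m | ∃ L : LinearOrder V, ∀ y, {x | WeaklyAccessible G L k x y}.ncard ≤ m}.Nonempty := by
    obtain ⟨n, ⟨e⟩⟩ := Finite.exists_equiv_fin V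
    exact ⟨Nat.card V, LinearOrder.lift' e e.injective, fun y => Set.ncard_le_card _⟩
  obtain ⟨L, hL⟩ := Nat.sInf_mem hne
  exact ⟨L, fun y => (hL y).trans_lt (by unfold wcol; omega)⟩

section OddDistanceColoring

variable [LinearOrder V] (G : SimpleGraph V) (p : ℕ)

def conflictGraph : SimpleGraph V where
  Adj z z' := z ≠ z' ∧ ∃ y, G.ReachableAbove z y ∧ G.ReachableAbove z' y ∧
    G.distAbove z y + G.distAbove z' y ≤ p
  symm := ⟨fun _ _ ⟨hne, y, hz, hz', hp⟩ => ⟨hne.symm, y, hz', hz, by omega⟩⟩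
  loopless := ⟨fun _ h => h.1 rfl⟩

variable {G p}

theorem conflictGraph.weaklyAccessible_of_adj {z z' : V} (h : (G.conflictGraph p).Adj z z')
    (hlt : z < z') : WeaklyAccessible G ‹_› p z z' := by
  obtain ⟨hne, y, hz, hz', hp⟩ := h
  obtain ⟨w, hw, hwl⟩ := hz.exists_walk_length_eq_distAbove
  obtain ⟨w', hw', hwl'⟩ := hz'.exists_walk_length_eq_distAbove
  refine weaklyAccessible_of_startsAtMin hne (w := w.append w'.reverse) (fun v hv => ?_)
    (by simpa [hwl, hwl'] using hp)
  rcases (Walk.mem_support_append_iff _ _).1 hv with hv | hv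
  · exact hw v hv
  · exact hlt.le.trans (hw' v (by simpa using hv))

theorem colorable_conflictGraph_of_ncard_lt [Finite V] (n : ℕ)
    (h : ∀ y, {x | WeaklyAccessible G ‹_› p x y}.ncard < n) : (G.conflictGraph p).Colorable n :=
  colorable_of_forall_ncard_lt_s9 _ n fun y =>
    (Set.ncard_le_ncard fun _ hx => conflictGraph.weaklyAccessible_of_adj hx.2 hx.1).trans_lt (h y)

variable {α : Type*} (C : (G.conflictGraph p).Coloring α)

noncomputable def classDistAbove (y : V) (k : α) : ℕ :=
  sInf {n | ∃ z, G.ReachableAbove z y ∧ C z = k ∧ G.distAbove z y = n}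

theorem classDistAbove_le {z y : V} (hz : G.ReachableAbove z y) :
    classDistAbove C y (C z) ≤ G.distAbove z y :=
  Nat.sInf_le ⟨z, hz, rfl, rfl⟩

/-- Distinct vertices of one colour class do not conflict, so every other vertex of the class of
`z` is more than `p - distAbove z y` away from `y`. -/
theorem min_le_classDistAbove {z y : V} (hz : G.ReachableAbove z y) :
    min (G.distAbove z y) (p + 1 - G.distAbove z y) ≤ classDistAbove C y (C z) := by
  obtain ⟨z', hz', hC, hd⟩ := Nat.sInf_mem
    (s := {n | ∃ z', G.ReachableAbove z' y ∧ C z' = C z ∧ G.distAbove z' y = n})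
    ⟨_, z, hz, rfl, rfl⟩
  rw [classDistAbove, ← hd]
  rcases eq_or_ne z' z with rfl | hne
  · exact min_le_left _ _
  · have : p < G.distAbove z' y + G.distAbove z y := by
      by_contra! hle
      exact C.valid ⟨hne, y, hz', hz, hle⟩ hC
    omega

noncomputable def oddDistColoring (y : V) (k : α) : Fin (p / 2 + 2) :=
  ⟨min (classDistAbove C y k) (p / 2 + 1), by omega⟩

variable {C}

theorem oddDistColoring_ne_of_distAbove_lt (hp : Odd p) {z u w : V} (hu : G.ReachableAbove z u)
    (hw : G.ReachableAbove z w) (hlt : G.distAbove z u < G.distAbove z w)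
    (hsum : G.distAbove z u + G.distAbove z w ≤ p) : oddDistColoring C u ≠ oddDistColoring C w := by
  intro h
  have hk := congrArg Fin.val (congrFun h (C z))
  simp only [oddDistColoring] at hk
  have := classDistAbove_le C hu
  have := min_le_classDistAbove C hu
  have := min_le_classDistAbove C hw
  obtain ⟨m, rfl⟩ := hp
  omega

theorem oddDistColoring_ne (hp : Odd p) {x y : V} (hr : G.Reachable x y)
    (hodd : Odd (G.dist x y)) (hle : G.dist x y ≤ p) :
    oddDistColoring C x ≠ oddDistColoring C y := by
  obtain ⟨z, hx, hy, hsum⟩ := hr.exists_distAbove_add_distAbove_eq_dist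
  rcases lt_trichotomy (G.distAbove z x) (G.distAbove z y) with hlt | heq | hgt
  · exact oddDistColoring_ne_of_distAbove_lt hp hx hy hlt (by omega)
  · rw [← hsum, heq, ← two_mul] at hodd
    exact absurd hodd (by simp)
  · exact (oddDistColoring_ne_of_distAbove_lt hp hy hx hgt (by omega)).symm

end OddDistanceColoring

end SimpleGraph

/-- Strengthening of Theorem 11(a): for odd positive `p`, a finite graph `G`, `q = wcol_p(G)`, and
`H = G^[♮1] ∪ G^[♮3] ∪ ⋯ ∪ G^[♮p]` (distinct vertices adjacent iff their distance in `G` is odd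
and at most `p`), we have `χ(H) ≤ (⌊p/2⌋+2)^q`. -/
theorem chromaticNumber_unionOddExactDistanceGraphs_le_pow_wcol
    [Fintype V] (G : SimpleGraph V) (p : ℕ) (hp : Odd p) (q : ℕ) (hq : q = wcol G p)
    (H : SimpleGraph V)
    (hH : ∀ x y : V, H.Adj x y ↔
      x ≠ y ∧ G.Reachable x y ∧ Odd (G.dist x y) ∧ G.dist x y ≤ p) :
    H.chromaticNumber ≤ (((p / 2 + 2) ^ q : ℕ) : ℕ∞) := by
  obtain ⟨L, hL⟩ := exists_linearOrder_forall_ncard_weaklyAccessible_lt G p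
  let _ : LinearOrder V := L
  obtain ⟨C⟩ := colorable_conflictGraph_of_ncard_lt (wcol G p) hL
  let D : H.Coloring (Fin (wcol G p) → Fin (p / 2 + 2)) :=
    Coloring.mk (oddDistColoring C) fun {x y} hxy =>
      let ⟨_, hr, hodd, hle⟩ := (hH x y).1 hxy
      oddDistColoring_ne hp hr hodd hle
  subst hq
  simpa using D.colorable.chromaticNumber_le
end

section
/- For every finite simple graph G and every positive integer k, the following inequalities hold: col_k(G) ≤ dcol_k(G) ≤ wcol_k(G), and moreover wcol_{⌊k/2⌋+1}(G) ≤ dcol_k(G). -/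
open SimpleGraph

variable {V : Type*}

/-- `x` is `k`-accessible from `y` w.r.t. the linear order `L`. -/
def Accessible (G : SimpleGraph V) (L : LinearOrder V) (k : ℕ) (x y : V) : Prop :=
  L.lt x y ∧ ∃ w : G.Walk x y, w.IsPath ∧ w.length ≤ k ∧
    ∀ z ∈ w.support, z ≠ x → z ≠ y → L.lt y z

/-- Membership of `x` in `D_{L,k}(y)`: there is a path `z_0,…,z_s` from `x = z_0` to `y = z_s` of
length `s ≤ k` on which `x` is the minimum vertex w.r.t. `L` and whose vertices `z_i` with
`⌊k/2⌋+1 ≤ i ≤ s` all satisfy `y ≤ z_i`. -/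
def DAccessible (G : SimpleGraph V) (L : LinearOrder V) (k : ℕ) (x y : V) : Prop :=
  x ≠ y ∧ ∃ w : G.Walk x y, w.IsPath ∧ w.length ≤ k ∧
    (∀ z ∈ w.support, L.le x z) ∧
    ∀ i : ℕ, k / 2 + 1 ≤ i → i ≤ w.length → L.le y (w.getVert i)

/-- The `k`-colouring number. -/
noncomputable def colk (G : SimpleGraph V) (k : ℕ) : ℕ :=
  1 + sInf { m : ℕ | ∃ L : LinearOrder V, ∀ y : V,
      {x : V | Accessible G L k x y}.ncard ≤ m }

/-- The distance-`k`-colouring number. -/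
noncomputable def dcol (G : SimpleGraph V) (k : ℕ) : ℕ :=
  1 + sInf { m : ℕ | ∃ L : LinearOrder V, ∀ y : V,
      {x : V | DAccessible G L k x y}.ncard ≤ m }

lemma getVert_eq_start_iff {G : SimpleGraph V} {x y : V} {w : G.Walk x y}
    (hp : w.IsPath) {i : ℕ} (hi : i ≤ w.length) (h : w.getVert i = x) : i = 0 := by
  induction w with
  | nil => simpa using hi
  | @cons a b c hadj q ih =>
    cases i with
    | zero => rfl
    | succ j =>
      exfalso
      rw [SimpleGraph.Walk.getVert_cons_succ] at h
      have hj : j ≤ q.length := by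
        simp only [SimpleGraph.Walk.length_cons] at hi; omega
      have hmem : q.getVert j ∈ q.support :=
        SimpleGraph.Walk.mem_support_iff_exists_getVert.mpr ⟨j, rfl, hj⟩
      rw [h] at hmem
      exact ((SimpleGraph.Walk.cons_isPath_iff _ _).mp hp).2 hmem

lemma sInf_aux [Fintype V] {P Q : LinearOrder V → V → V → Prop}
    (h : ∀ L x y, P L x y → Q L x y)
    (hne : {m : ℕ | ∃ L : LinearOrder V, ∀ y : V, {x : V | Q L x y}.ncard ≤ m}.Nonempty) :
    sInf {m : ℕ | ∃ L : LinearOrder V, ∀ y : V, {x : V | P L x y}.ncard ≤ m} ≤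
    sInf {m : ℕ | ∃ L : LinearOrder V, ∀ y : V, {x : V | Q L x y}.ncard ≤ m} := by
  apply Nat.sInf_le
  obtain ⟨L, hL⟩ := Nat.sInf_mem hne
  refine ⟨L, fun y => le_trans (Set.ncard_le_ncard ?_ (Set.toFinite _)) (hL y)⟩
  exact fun x hx => h L x y hx

/-- `col_k(G) ≤ dcol_k(G) ≤ wcol_k(G)`, and `wcol_{⌊k/2⌋+1}(G) ≤ dcol_k(G)`. -/
theorem colk_le_dcol_le_wcol
    [Fintype V] (G : SimpleGraph V) (k : ℕ) (hk : 0 < k) :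
    colk G k ≤ dcol G k ∧ dcol G k ≤ wcol G k ∧ wcol G (k / 2 + 1) ≤ dcol G k := by
  classical
  have hLO : Nonempty (LinearOrder V) :=
    ⟨LinearOrder.lift' (Fintype.equivFin V) (Fintype.equivFin V).injective⟩
  have hne : ∀ P : LinearOrder V → V → V → Prop,
      {m : ℕ | ∃ L, ∀ y, {x | P L x y}.ncard ≤ m}.Nonempty := fun P => by
    obtain ⟨L⟩ := hLO
    refine ⟨Fintype.card V, L, fun y => ?_⟩
    calc {x | P L x y}.ncard ≤ (Set.univ : Set V).ncard :=
          Set.ncard_le_ncard (Set.subset_univ _) (Set.toFinite _)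
      _ = Fintype.card V := by simp [Set.ncard_univ, Nat.card_eq_fintype_card]
  have hAD : ∀ (L : LinearOrder V) x y, Accessible G L k x y → DAccessible G L k x y := by
    intro L x y h
    letI := L
    obtain ⟨hlt, w, hp, hlen, hint⟩ := h
    refine ⟨ne_of_lt hlt, w, hp, hlen, ?_, ?_⟩
    · intro z hz
      by_cases hzx : z = x
      · exact hzx ▸ le_refl x
      by_cases hzy : z = y
      · exact hzy ▸ le_of_lt hlt
      · exact le_of_lt (lt_trans hlt (hint z hz hzx hzy))
    · intro i hi1 hi2
      have hmem : w.getVert i ∈ w.support :=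
        SimpleGraph.Walk.mem_support_iff_exists_getVert.mpr ⟨i, rfl, hi2⟩
      by_cases hy : w.getVert i = y
      · exact hy.symm.le
      have hx : w.getVert i ≠ x := fun h => by
        have := getVert_eq_start_iff hp hi2 h; omega
      exact le_of_lt (hint _ hmem hx hy)
  have hDW : ∀ (L : LinearOrder V) x y, DAccessible G L k x y → WeaklyAccessible G L k x y := by
    intro L x y h
    letI := L
    obtain ⟨hxy, w, hp, hlen, hmin, _⟩ := h
    refine ⟨lt_of_le_of_ne (hmin y w.end_mem_support) hxy, w, hp, hlen, ?_⟩
    intro z hz hzx _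
    exact lt_of_le_of_ne (hmin z hz) (Ne.symm hzx)
  have hWD : ∀ (L : LinearOrder V) x y,
      WeaklyAccessible G L (k / 2 + 1) x y → DAccessible G L k x y := by
    intro L x y h
    letI := L
    obtain ⟨hlt, w, hp, hlen, hint⟩ := h
    have hk2 : k / 2 < k := Nat.div_lt_self hk one_lt_two
    refine ⟨ne_of_lt hlt, w, hp, by omega, ?_, ?_⟩
    · intro z hz
      by_cases hzx : z = x
      · exact hzx ▸ le_refl x
      by_cases hzy : z = y
      · exact hzy ▸ le_of_lt hlt
      · exact le_of_lt (hint z hz hzx hzy)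
    · intro i hi1 hi2
      have hgv : w.getVert i = y := w.getVert_of_length_le (by omega)
      exact hgv.symm.le
  exact ⟨Nat.add_le_add_left (sInf_aux hAD (hne _)) 1,
    Nat.add_le_add_left (sInf_aux hDW (hne _)) 1,
    Nat.add_le_add_left (sInf_aux hWD (hne _)) 1⟩
end

section
/- Let G be a finite simple graph, L a linear ordering of its vertex set, and k, ℓ positive integers. Let x, y, z be three distinct vertices of G. If x is weakly k-accessible from y and z is weakly ℓ-accessible from y (both with respect to L), then x is weakly (k+ℓ)-accessible from z or z is weakly (k+ℓ)-accessible from x. -/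
open SimpleGraph

variable {V : Type*}

private lemma weaklyAccessible_aux (G : SimpleGraph V) (L : LinearOrder V) (k ℓ : ℕ)
    (x y z : V) (hxz : L.lt x z)
    (h1 : WeaklyAccessible G L k x y) (h2 : WeaklyAccessible G L ℓ z y) :
    WeaklyAccessible G L (k + ℓ) x z := by
  letI := L
  obtain ⟨hxy, p, hp, hpl, hps⟩ := h1
  obtain ⟨hzy, q, hq, hql, hqs⟩ := h2
  refine ⟨hxz, (p.append q.reverse).bypass, Walk.bypass_isPath _, ?_, ?_⟩
  · calc (p.append q.reverse).bypass.length ≤ (p.append q.reverse).length :=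
          Walk.length_bypass_le _
      _ = p.length + q.length := by simp [Walk.length_append]
      _ ≤ k + ℓ := Nat.add_le_add hpl hql
  · intro v hv hvx hvz
    have hv' : v ∈ (p.append q.reverse).support := Walk.support_bypass_subset _ hv
    rw [Walk.mem_support_append_iff] at hv'
    rcases hv' with hv' | hv'
    · by_cases hvy : v = y
      · subst hvy; exact hxy
      · exact hps v hv' hvx hvy
    · rw [Walk.support_reverse, List.mem_reverse] at hv'
      by_cases hvy : v = y
      · subst hvy; exact hxy
      · exact lt_trans hxz (hqs v hv' hvz hvy)

/-- Lemma 14: if `x` is weakly `k`-accessible from `y` and `z` is weakly `ℓ`-accessible from `y`,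
and `x, y, z` are distinct, then `x` is weakly `(k+ℓ)`-accessible from `z` or `z` is weakly
`(k+ℓ)`-accessible from `x`. -/
theorem weaklyAccessible_trans_or
    [Fintype V] (G : SimpleGraph V) (L : LinearOrder V) (k ℓ : ℕ)
    (hk : 0 < k) (hℓ : 0 < ℓ) (x y z : V)
    (hxy : x ≠ y) (hxz : x ≠ z) (hyz : y ≠ z)
    (h1 : WeaklyAccessible G L k x y) (h2 : WeaklyAccessible G L ℓ z y) :
    WeaklyAccessible G L (k + ℓ) x z ∨ WeaklyAccessible G L (k + ℓ) z x := by
  letI := L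
  rcases lt_or_gt_of_ne hxz with h | h
  · exact Or.inl (weaklyAccessible_aux G L k ℓ x y z h h1 h2)
  · have := weaklyAccessible_aux G L ℓ k z y x h h2 h1
    rw [Nat.add_comm] at this
    exact Or.inr this
end

section
/- Let p be a positive integer and let G be a finite simple graph with odd girth at least p+1. Let x and y be distinct vertices of G and let W be a walk between x and y of length r ≤ p. Then there exists a path in G between x and y of length s ≤ r such that s and r have the same parity. -/
open SimpleGraph

variable {V : Type*}

private lemma path_edge_length_one {G : SimpleGraph V} {z u : V} (P : G.Walk z u)
    (hP : P.IsPath) (he : s(u, z) ∈ P.edges) : P.length = 1 := by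
  cases P with
  | nil => simp at he
  | @cons _ b _ h2 P2 =>
    rw [Walk.edges_cons, List.mem_cons] at he
    rcases he with he | he
    · rw [Sym2.eq_iff] at he
      rcases he with ⟨huz, hzb⟩ | ⟨hub, _⟩
      · subst huz
        rw [Walk.isPath_iff_eq_nil] at hP
        simp at hP
      · subst hub
        rw [Walk.cons_isPath_iff] at hP
        rw [Walk.isPath_iff_eq_nil] at hP
        rw [hP.1]
        simp
    · exfalso
      have hz := Walk.snd_mem_support_of_mem_edges P2 he
      rw [Walk.cons_isPath_iff] at hP
      exact hP.2 hz

private lemma exists_cons_of_mem_tail {G : SimpleGraph V} {u y : V} (q : G.Walk u y)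
    (h : u ∈ q.support.tail) :
    ∃ (z : V) (h' : G.Adj u z) (q' : G.Walk z y), q = Walk.cons h' q' ∧ u ∈ q'.support := by
  cases q with
  | nil => simp at h
  | cons h' q' => exact ⟨_, h', q', rfl, by simpa using h⟩

private lemma aux {G : SimpleGraph V} {p : ℕ}
    (hgirth : OddGirthAtLeast G (p + 1)) :
    ∀ n, ∀ (x y : V), x ≠ y → ∀ w : G.Walk x y, w.length = n → w.length ≤ p →
      ∃ P : G.Walk x y, P.IsPath ∧ P.length ≤ w.length ∧ P.length % 2 = w.length % 2 := by
  classical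
  intro n
  induction n using Nat.strong_induction_on with
  | _ n IH =>
  intro x y hxy w hlen hwp
  by_cases hnod : w.support.Nodup
  · exact ⟨w, Walk.IsPath.mk' hnod, le_refl _, rfl⟩
  · obtain ⟨u, hu⟩ := List.exists_duplicate_iff_not_nodup.mpr hnod
    have hcount : 2 ≤ w.support.count u := List.duplicate_iff_two_le_count.mp hu
    have hu1 : u ∈ w.support := hu.mem
    have hspec := w.take_spec hu1
    have hcount1 : (w.takeUntil u hu1).support.count u = 1 :=
      w.count_support_takeUntil_eq_one hu1
    have hsupp : w.support
        = (w.takeUntil u hu1).support ++ (w.dropUntil u hu1).support.tail := by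
      conv_lhs => rw [← hspec]
      rw [Walk.support_append]
    have hmem : u ∈ (w.dropUntil u hu1).support.tail := by
      rw [hsupp, List.count_append, hcount1] at hcount
      exact List.count_pos_iff.mp (by omega)
    obtain ⟨z, h', q'', hqe, hu2⟩ := exists_cons_of_mem_tail _ hmem
    have hq2spec := q''.take_spec hu2
    -- length bookkeeping
    have hlen1 : w.length = (w.takeUntil u hu1).length + (w.dropUntil u hu1).length := by
      conv_lhs => rw [← hspec]
      rw [Walk.length_append]
    have hlen2 : (w.dropUntil u hu1).length = q''.length + 1 := by
      rw [hqe, Walk.length_cons]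
    have hlen3 : q''.length = (q''.takeUntil u hu2).length + (q''.dropUntil u hu2).length := by
      conv_lhs => rw [← hq2spec]
      rw [Walk.length_append]
    set w' : G.Walk x y := (w.takeUntil u hu1).append (q''.dropUntil u hu2) with hw'
    have hlenw' : w'.length = (w.takeUntil u hu1).length + (q''.dropUntil u hu2).length := by
      rw [hw', Walk.length_append]
    rcases Nat.even_or_odd ((q''.takeUntil u hu2).length + 1) with hev | hod
    · obtain ⟨k, hk⟩ := hev
      have hlt : w'.length < n := by omega
      obtain ⟨P, hP, hPle, hPpar⟩ := IH w'.length hlt x y hxy w' rfl (by omega)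
      exact ⟨P, hP, by omega, by omega⟩
    · exfalso
      have hevct : (q''.takeUntil u hu2).length % 2 = 0 := by
        have := Nat.odd_iff.mp hod
        omega
      have hlt : (q''.takeUntil u hu2).length < n := by omega
      obtain ⟨P, hP, hPle, hPpar⟩ := IH (q''.takeUntil u hu2).length hlt z u h'.ne'
        (q''.takeUntil u hu2) rfl (by omega)
      by_cases hein : s(u, z) ∈ P.edges
      · have h1 := path_edge_length_one P hP hein
        omega
      · have hcyc : (Walk.cons h' P).IsCycle := (Walk.cons_isCycle_iff P h').mpr ⟨hP, hein⟩
        have hodd : Odd (Walk.cons h' P).length := by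
          rw [Walk.length_cons, Nat.odd_iff]
          omega
        have := hgirth u (Walk.cons h' P) hcyc hodd
        rw [Walk.length_cons] at this
        omega

/-- Lemma 15(b): in a finite graph with odd girth at least `p+1`, every walk between distinct
vertices `x` and `y` of length `r ≤ p` contains a path between `x` and `y` of length `s ≤ r`
with `s ≡ r (mod 2)`. -/
theorem exists_path_of_walk_same_parity
    [Fintype V] (G : SimpleGraph V) (p : ℕ) (hp : 0 < p)
    (hgirth : OddGirthAtLeast G (p + 1)) (x y : V) (hxy : x ≠ y)
    (w : G.Walk x y) (hw : w.length ≤ p) :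
    ∃ P : G.Walk x y, P.IsPath ∧ P.length ≤ w.length ∧ P.length % 2 = w.length % 2 := by
  exact aux hgirth w.length x y hxy w rfl hw
end

section
/- Let G be a finite simple graph, let t be a positive integer, and let L be a linear ordering of the vertex set of G such that every vertex y satisfies |R_{L,∞}(y)| ≤ t. Then for every positive integer k and every vertex y of G, |Q_{L,k}(y)| ≤ C(k+t, t) − 1, where C(·,·) denotes the binomial coefficient. -/
open SimpleGraph

variable {V : Type*}

/-- `x` is `∞`-accessible from `y` w.r.t. the linear order `L` (no length restriction). -/
def AccessibleInf (G : SimpleGraph V) (L : LinearOrder V) (x y : V) : Prop :=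
  L.lt x y ∧ ∃ w : G.Walk x y, w.IsPath ∧
    ∀ z ∈ w.support, z ≠ x → z ≠ y → L.lt y z

namespace Lemma16

open Finset

/-! ### Arithmetic about the bound function -/

/-- `hf m γ = C(m+γ, γ) - 1`. -/
def hf (m γ : ℕ) : ℕ := (m + γ).choose γ - 1

lemma hf_choose_pos (m γ : ℕ) : 0 < (m + γ).choose γ :=
  Nat.choose_pos (by omega)

lemma hf_zero (γ : ℕ) : hf 0 γ = 0 := by
  simp [hf, Nat.choose_self]

lemma hf_pascal (m g : ℕ) : hf (m + 1) (g + 1) = 1 + hf m (g + 1) + hf (m + 1) g := by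
  have key : (m + g + 1 + 1).choose (g + 1) = (m + g + 1).choose g + (m + g + 1).choose (g + 1) :=
    Nat.choose_succ_succ (m + g + 1) g
  have p1 : 0 < (m + g + 1).choose g := Nat.choose_pos (by omega)
  have p2 : 0 < (m + g + 1).choose (g + 1) := Nat.choose_pos (by omega)
  have e1 : hf (m + 1) (g + 1) = (m + g + 1 + 1).choose (g + 1) - 1 := by
    have : m + 1 + (g + 1) = m + g + 1 + 1 := by omega
    rw [hf, this]
  have e2 : hf m (g + 1) = (m + g + 1).choose (g + 1) - 1 := by
    have : m + (g + 1) = m + g + 1 := by omega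
    rw [hf, this]
  have e3 : hf (m + 1) g = (m + g + 1).choose g - 1 := by
    have : m + 1 + g = m + g + 1 := by omega
    rw [hf, this]
  omega

lemma hf_mono_m {m m' : ℕ} (γ : ℕ) (h : m ≤ m') : hf m γ ≤ hf m' γ :=
  Nat.sub_le_sub_right (Nat.choose_le_choose γ (by omega)) 1

lemma hf_succ_right (m g : ℕ) : hf m g ≤ hf m (g + 1) := by
  have key : (m + g + 1).choose (g + 1) = (m + g).choose g + (m + g).choose (g + 1) :=
    Nat.choose_succ_succ (m + g) g
  have e : hf m (g + 1) = (m + g + 1).choose (g + 1) - 1 := by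
    have : m + (g + 1) = m + g + 1 := by omega
    rw [hf, this]
  have p1 : 0 < (m + g).choose g := Nat.choose_pos (by omega)
  rw [hf, e]
  omega

lemma hf_mono_g (m : ℕ) {g g' : ℕ} (h : g ≤ g') : hf m g ≤ hf m g' := by
  induction g', h using Nat.le_induction with
  | base => exact le_rfl
  | succ n hn ih => exact ih.trans (hf_succ_right m n)

/-! ### The slot-counting lemma -/

section Slots

variable {α : Type*} [DecidableEq α] [LinearOrder α]

lemma slots : ∀ (n : ℕ) (Z : Finset α), Z.card = n → ∀ (m γ νs : ℕ) (ν : α → ℕ),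
    (∀ z ∈ Z, ν z + (Z.filter (fun z' => z' < z)).card ≤ γ) →
    νs + Z.card ≤ γ →
    Z.card + (∑ z ∈ Z, hf m (ν z)) + hf m νs ≤ hf (m + 1) γ := by
  intro n
  induction n with
  | zero =>
    intro Z hZ m γ νs ν _ h2
    have hZe : Z = ∅ := Finset.card_eq_zero.mp hZ
    subst hZe
    simp only [Finset.card_empty, Finset.sum_empty, zero_add, add_zero]
    calc hf m νs ≤ hf (m + 1) νs := hf_mono_m νs (by omega)
      _ ≤ hf (m + 1) γ := hf_mono_g _ (by simpa using h2)
  | succ n ih =>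
    intro Z hZ m γ νs ν h1 h2
    have hne : Z.Nonempty := Finset.card_pos.mp (by omega)
    set z0 := Z.min' hne with hz0def
    have hz0 : z0 ∈ Z := Z.min'_mem hne
    obtain ⟨g, rfl⟩ : ∃ g, γ = g + 1 := ⟨γ - 1, by omega⟩
    set Z' := Z.erase z0 with hZ'def
    have hZ' : Z'.card = n := by
      rw [hZ'def, Finset.card_erase_of_mem hz0, hZ]
      omega
    have h1' : ∀ z ∈ Z', ν z + (Z'.filter (fun z' => z' < z)).card ≤ g := by
      intro z hz
      have hzZ : z ∈ Z := Finset.mem_of_mem_erase hz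
      have hne2 : z0 < z :=
        lt_of_le_of_ne (Z.min'_le z hzZ) (Ne.symm (Finset.ne_of_mem_erase hz))
      have hins : Z.filter (fun z' => z' < z) = insert z0 (Z'.filter (fun z' => z' < z)) := by
        ext a
        simp only [Finset.mem_filter, Finset.mem_insert, hZ'def, Finset.mem_erase]
        constructor
        · rintro ⟨haZ, halt⟩
          by_cases ha0 : a = z0
          · exact Or.inl ha0
          · exact Or.inr ⟨⟨ha0, haZ⟩, halt⟩
        · rintro (rfl | ⟨⟨_, haZ⟩, halt⟩)
          · exact ⟨hz0, hne2⟩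
          · exact ⟨haZ, halt⟩
      have hnotmem : z0 ∉ Z'.filter (fun z' => z' < z) := by
        simp [hZ'def]
      have hcardeq : (Z.filter (fun z' => z' < z)).card
          = (Z'.filter (fun z' => z' < z)).card + 1 := by
        rw [hins, Finset.card_insert_of_notMem hnotmem]
      have := h1 z hzZ
      omega
    have h2' : νs + Z'.card ≤ g := by omega
    have IH := ih Z' hZ' m g νs ν h1' h2'
    have hν0 : ν z0 ≤ g + 1 := by
      have := h1 z0 hz0
      omega
    have hsum : ∑ z ∈ Z', hf m (ν z) + hf m (ν z0) = ∑ z ∈ Z, hf m (ν z) :=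
      Finset.sum_erase_add Z _ hz0
    have hfz0 : hf m (ν z0) ≤ hf m (g + 1) := hf_mono_g _ hν0
    have hp := hf_pascal m g
    omega

end Slots

/-! ### The abstract closure system -/

section Core

variable {α : Type*} [DecidableEq α] [LinearOrder α]

/-- Iterated closure of the hop system `S`. -/
def Wc (S : α → Finset α) : ℕ → α → Finset α
  | 0, _ => ∅
  | m + 1, y => S y ∪ (S y).biUnion (Wc S m)

variable {S : α → Finset α} {t : ℕ}

lemma mem_Wc_lt (hlt : ∀ v x, x ∈ S v → x < v) :
    ∀ (m : ℕ) (y x : α), x ∈ Wc S m y → x < y := by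
  intro m
  induction m with
  | zero => intro y x hx; simp [Wc] at hx
  | succ m ih =>
    intro y x hx
    rcases Finset.mem_union.mp hx with h | h
    · exact hlt y x h
    · obtain ⟨z, hzS, hxz⟩ := Finset.mem_biUnion.mp h
      exact lt_trans (ih z x hxz) (hlt y z hzS)

lemma S_subset_Wc (m : ℕ) (y : α) : S y ⊆ Wc S (m + 1) y := by
  intro x hx
  exact Finset.mem_union_left _ hx

lemma Wc_step : ∀ (m : ℕ) (z y x : α), x ∈ S z → z ∈ Wc S m y → x ∈ Wc S (m + 1) y := by
  intro m
  induction m with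
  | zero => intro z y x _ hz; simp [Wc] at hz
  | succ m ih =>
    intro z y x hxS hz
    rcases Finset.mem_union.mp hz with h | h
    · refine Finset.mem_union_right _ ?_
      exact Finset.mem_biUnion.mpr ⟨z, h, S_subset_Wc m z hxS⟩
    · obtain ⟨w, hwS, hzw⟩ := Finset.mem_biUnion.mp h
      refine Finset.mem_union_right _ ?_
      exact Finset.mem_biUnion.mpr ⟨w, hwS, ih z w x hxS hzw⟩

/-- Residual capacity of `x` relative to the family `F`. -/
def gam (t : ℕ) (S : α → Finset α) (F : Finset α) (x : α) : ℕ := t - (F ∩ S x).card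

lemma sponsor_aux (hlt : ∀ v x, x ∈ S v → x < v)
    (hP : ∀ v a b, a ∈ S v → b ∈ S v → a < b → a ∈ S b) :
    ∀ (n : ℕ) (F : Finset α) (z x0 : α), z ∉ F → x0 ∈ F → z ∈ S x0 →
      (F.filter (fun h => h < x0)).card ≤ n →
      ∃ x ∈ F, z ∈ S x ∧ ∀ h ∈ F, h ∈ S x → h < z := by
  intro n
  induction n with
  | zero =>
    intro F z x0 hzF hx0 hzS hcnt
    refine ⟨x0, hx0, hzS, ?_⟩
    intro h hhF hhS
    by_contra hhlt
    have hzh : z < h := lt_of_le_of_ne (not_lt.mp hhlt) (fun e => hzF (e ▸ hhF))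
    have hhx0 : h < x0 := hlt x0 h hhS
    have : h ∈ F.filter (fun h' => h' < x0) := Finset.mem_filter.mpr ⟨hhF, hhx0⟩
    have : 0 < (F.filter (fun h' => h' < x0)).card := Finset.card_pos.mpr ⟨h, this⟩
    omega
  | succ n ih =>
    intro F z x0 hzF hx0 hzS hcnt
    by_cases hex : ∃ h ∈ F, h ∈ S x0 ∧ ¬ h < z
    · obtain ⟨h, hhF, hhS, hhlt⟩ := hex
      have hzh : z < h := lt_of_le_of_ne (not_lt.mp hhlt) (fun e => hzF (e ▸ hhF))
      have hzSh : z ∈ S h := hP x0 z h hzS hhS hzh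
      have hhx0 : h < x0 := hlt x0 h hhS
      have hhmem : h ∈ F.filter (fun h' => h' < x0) := Finset.mem_filter.mpr ⟨hhF, hhx0⟩
      have hsub : F.filter (fun h' => h' < h) ⊆ (F.filter (fun h' => h' < x0)).erase h := by
        intro a ha
        obtain ⟨haF, halt⟩ := Finset.mem_filter.mp ha
        refine Finset.mem_erase.mpr ⟨fun e => ?_, Finset.mem_filter.mpr ⟨haF, lt_trans halt hhx0⟩⟩
        exact absurd (e ▸ halt) (lt_irrefl h)
      have hcard : (F.filter (fun h' => h' < h)).card ≤ n := by
        have h1 := Finset.card_le_card hsub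
        have h2 := Finset.card_erase_of_mem hhmem
        omega
      exact ih F z h hzF hhF hzSh hcard
    · push_neg at hex
      exact ⟨x0, hx0, hzS, fun h hh hhs => hex h hh hhs⟩

lemma cap (hlt : ∀ v x, x ∈ S v → x < v)
    (hP : ∀ v a b, a ∈ S v → b ∈ S v → a < b → a ∈ S b)
    (hcard : ∀ v, (S v).card ≤ t)
    (F : Finset α) (m : ℕ) :
    ((F.biUnion S) \ F).card + ∑ z ∈ F.biUnion S, hf m (gam t S (F.biUnion S) z)
      ≤ ∑ x ∈ F, hf (m + 1) (gam t S F x) := by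
  classical
  set F' := F.biUnion S with hF'
  have hspon : ∀ z ∈ F' \ F, ∃ x, x ∈ F ∧ z ∈ S x ∧ ∀ h ∈ F, h ∈ S x → h < z := by
    intro z hz
    obtain ⟨hzF', hzF⟩ := Finset.mem_sdiff.mp hz
    obtain ⟨x0, hx0, hzS⟩ := Finset.mem_biUnion.mp hzF'
    obtain ⟨x, hx, h⟩ := sponsor_aux hlt hP (F.filter (fun h => h < x0)).card F z x0 hzF hx0 hzS le_rfl
    exact ⟨x, hx, h⟩
  choose! σ hσF hσS hσlt using hspon
  have hmaps : ∀ z ∈ F' \ F, σ z ∈ F := hσF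
  have hcardsum : (F' \ F).card = ∑ x ∈ F, ((F' \ F).filter (fun z => σ z = x)).card :=
    Finset.card_eq_sum_card_fiberwise hmaps
  have hsumsum : ∑ x ∈ F, ∑ z ∈ (F' \ F).filter (fun z => σ z = x), hf m (gam t S F' z)
      = ∑ z ∈ F' \ F, hf m (gam t S F' z) :=
    Finset.sum_fiberwise_of_maps_to hmaps _
  have hsplit : ∑ z ∈ F' \ F, hf m (gam t S F' z) + ∑ z ∈ F' ∩ F, hf m (gam t S F' z)
      = ∑ z ∈ F', hf m (gam t S F' z) := by
    rw [← Finset.sum_union (Finset.disjoint_sdiff_inter F' F), Finset.sdiff_union_inter]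
  have hinter : ∑ z ∈ F' ∩ F, hf m (gam t S F' z) ≤ ∑ x ∈ F, hf m (gam t S F' x) :=
    Finset.sum_le_sum_of_subset Finset.inter_subset_right
  have hper : ∀ x ∈ F,
      ((F' \ F).filter (fun z => σ z = x)).card
        + ∑ z ∈ (F' \ F).filter (fun z => σ z = x), hf m (gam t S F' z)
        + hf m (gam t S F' x) ≤ hf (m + 1) (gam t S F x) := by
    intro x hx
    set Z := (F' \ F).filter (fun z => σ z = x) with hZdef
    have hZmem : ∀ z ∈ Z, z ∈ S x ∧ z ∈ F' ∧ z ∉ F ∧ (∀ h ∈ F, h ∈ S x → h < z) := by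
      intro z hz
      obtain ⟨hzsd, hzσ⟩ := Finset.mem_filter.mp hz
      obtain ⟨hzF', hzF⟩ := Finset.mem_sdiff.mp hzsd
      refine ⟨hzσ ▸ hσS z hzsd, hzF', hzF, ?_⟩
      intro h hh hhS
      exact hσlt z hzsd h hh (hzσ ▸ hhS)
    refine slots Z.card Z rfl m (gam t S F x) (gam t S F' x) (gam t S F') ?_ ?_
    · -- h1
      intro z hz
      obtain ⟨hzS, hzF', hzF, hzdom⟩ := hZmem z hz
      have hAB : (F ∩ S x) ∪ Z.filter (fun z' => z' < z) ⊆ F' ∩ S z := by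
        intro a ha
        rcases Finset.mem_union.mp ha with haA | haB
        · obtain ⟨haF, haS⟩ := Finset.mem_inter.mp haA
          have haz : a < z := hzdom a haF haS
          refine Finset.mem_inter.mpr ⟨?_, hP x a z haS hzS haz⟩
          exact Finset.mem_biUnion.mpr ⟨x, hx, haS⟩
        · obtain ⟨haZ, halt⟩ := Finset.mem_filter.mp haB
          obtain ⟨haS, haF', _, _⟩ := hZmem a haZ
          exact Finset.mem_inter.mpr ⟨haF', hP x a z haS hzS halt⟩
      have hdisj : Disjoint (F ∩ S x) (Z.filter (fun z' => z' < z)) := by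
        rw [Finset.disjoint_left]
        intro a haA haB
        obtain ⟨haZ, _⟩ := Finset.mem_filter.mp haB
        obtain ⟨_, _, haF, _⟩ := hZmem a haZ
        exact haF (Finset.mem_inter.mp haA).1
      have hcardAB : (F ∩ S x).card + (Z.filter (fun z' => z' < z)).card ≤ (F' ∩ S z).card := by
        rw [← Finset.card_union_of_disjoint hdisj]
        exact Finset.card_le_card hAB
      have hSz : (F' ∩ S z).card ≤ t := le_trans (Finset.card_le_card Finset.inter_subset_right) (hcard z)
      have hSx : (F ∩ S x).card ≤ t := le_trans (Finset.card_le_card Finset.inter_subset_right) (hcard x)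
      simp only [gam]
      omega
    · -- h2
      have hAZ : (F ∩ S x) ∪ Z ⊆ F' ∩ S x := by
        intro a ha
        rcases Finset.mem_union.mp ha with haA | haZ
        · obtain ⟨haF, haS⟩ := Finset.mem_inter.mp haA
          exact Finset.mem_inter.mpr ⟨Finset.mem_biUnion.mpr ⟨x, hx, haS⟩, haS⟩
        · obtain ⟨haS, haF', _, _⟩ := hZmem a haZ
          exact Finset.mem_inter.mpr ⟨haF', haS⟩
      have hdisj : Disjoint (F ∩ S x) Z := by
        rw [Finset.disjoint_left]
        intro a haA haZ
        obtain ⟨_, _, haF, _⟩ := hZmem a haZ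
        exact haF (Finset.mem_inter.mp haA).1
      have hcardAZ : (F ∩ S x).card + Z.card ≤ (F' ∩ S x).card := by
        rw [← Finset.card_union_of_disjoint hdisj]
        exact Finset.card_le_card hAZ
      have hSx : (F' ∩ S x).card ≤ t := le_trans (Finset.card_le_card Finset.inter_subset_right) (hcard x)
      have hSx' : (F ∩ S x).card ≤ t := le_trans (Finset.card_le_card Finset.inter_subset_right) (hcard x)
      simp only [gam]
      omega
  have hsumper : ∑ x ∈ F, (((F' \ F).filter (fun z => σ z = x)).card
        + ∑ z ∈ (F' \ F).filter (fun z => σ z = x), hf m (gam t S F' z)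
        + hf m (gam t S F' x))
      ≤ ∑ x ∈ F, hf (m + 1) (gam t S F x) := Finset.sum_le_sum hper
  rw [Finset.sum_add_distrib, Finset.sum_add_distrib] at hsumper
  omega

lemma uprime (hlt : ∀ v x, x ∈ S v → x < v)
    (hP : ∀ v a b, a ∈ S v → b ∈ S v → a < b → a ∈ S b)
    (hcard : ∀ v, (S v).card ≤ t) :
    ∀ (m : ℕ) (F : Finset α),
      ((F.biUnion (Wc S m)) \ F).card ≤ ∑ x ∈ F, hf m (gam t S F x) := by
  intro m
  induction m with
  | zero =>
    intro F
    have : F.biUnion (Wc S 0) = ∅ := by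
      ext a; simp [Wc]
    simp [this]
  | succ m ih =>
    intro F
    set F' := F.biUnion S with hF'
    have hsub : (F.biUnion (Wc S (m + 1))) \ F ⊆ (F' \ F) ∪ ((F'.biUnion (Wc S m)) \ F') := by
      intro u hu
      obtain ⟨huW, huF⟩ := Finset.mem_sdiff.mp hu
      obtain ⟨x, hxF, huWx⟩ := Finset.mem_biUnion.mp huW
      rcases Finset.mem_union.mp huWx with h | h
      · exact Finset.mem_union_left _ (Finset.mem_sdiff.mpr
          ⟨Finset.mem_biUnion.mpr ⟨x, hxF, h⟩, huF⟩)
      · obtain ⟨z, hzS, huz⟩ := Finset.mem_biUnion.mp h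
        by_cases hF'mem : u ∈ F'
        · exact Finset.mem_union_left _ (Finset.mem_sdiff.mpr ⟨hF'mem, huF⟩)
        · refine Finset.mem_union_right _ (Finset.mem_sdiff.mpr ⟨?_, hF'mem⟩)
          exact Finset.mem_biUnion.mpr ⟨z, Finset.mem_biUnion.mpr ⟨x, hxF, hzS⟩, huz⟩
    have h1 : ((F.biUnion (Wc S (m + 1))) \ F).card
        ≤ (F' \ F).card + ((F'.biUnion (Wc S m)) \ F').card :=
      le_trans (Finset.card_le_card hsub) (Finset.card_union_le _ _)
    have h2 := ih F'
    have h3 := cap hlt hP hcard F m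
    rw [← hF'] at h3
    omega

lemma core_card (hlt : ∀ v x, x ∈ S v → x < v)
    (hP : ∀ v a b, a ∈ S v → b ∈ S v → a < b → a ∈ S b)
    (hcard : ∀ v, (S v).card ≤ t)
    (k : ℕ) (y : α) : (Wc S k y).card ≤ (k + t).choose t - 1 := by
  have h0 := uprime hlt hP hcard k {y}
  rw [Finset.singleton_biUnion] at h0
  have hy : y ∉ Wc S k y := fun h => lt_irrefl y (mem_Wc_lt hlt k y y h)
  have hsd : Wc S k y \ {y} = Wc S k y := by
    rw [Finset.sdiff_eq_self_iff_disjoint]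
    simp [hy]
  rw [hsd] at h0
  have hyS : y ∉ S y := fun h => lt_irrefl y (hlt y y h)
  have hgam : gam t S {y} y = t := by
    have : ({y} : Finset α) ∩ S y = ∅ := by
      ext a
      simp only [Finset.mem_inter, Finset.mem_singleton, Finset.notMem_empty, iff_false, not_and]
      rintro rfl
      exact hyS
    simp [gam, this]
  rw [Finset.sum_singleton, hgam] at h0
  exact h0

end Core

end Lemma16

/-! ### The graph-theoretic layer -/

namespace Lemma16Graph

open Lemma16 Finset

variable [Fintype V] (G : SimpleGraph V) (L : LinearOrder V)

/-- The set `R_{L,∞}(v)` as a `Finset`. -/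
noncomputable def Sf (v : V) : Finset V :=
  (Set.toFinite {x | AccessibleInf G L x v}).toFinset

lemma mem_Sf {x v : V} : x ∈ Sf G L v ↔ AccessibleInf G L x v := by
  simp [Sf]

lemma Sf_lt {x v : V} (h : x ∈ Sf G L v) : L.lt x v :=
  ((mem_Sf G L).mp h).1

lemma Sf_P {v a b : V} (ha : a ∈ Sf G L v) (hb : b ∈ Sf G L v) (hab : L.lt a b) :
    a ∈ Sf G L b := by
  classical
  letI := L
  rw [mem_Sf] at ha hb ⊢
  obtain ⟨hav, wa, hwa, hintA⟩ := ha
  obtain ⟨hbv, wb, hwb, hintB⟩ := hb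
  refine ⟨hab, (wa.append wb.reverse).bypass, SimpleGraph.Walk.bypass_isPath _, ?_⟩
  intro z hz hza hzb
  have hz' : z ∈ (wa.append wb.reverse).support :=
    SimpleGraph.Walk.support_bypass_subset _ hz
  rw [SimpleGraph.Walk.mem_support_append_iff] at hz'
  rcases hz' with h | h
  · by_cases hzv : z = v
    · exact hzv ▸ hbv
    · exact lt_trans hbv (hintA z h hza hzv)
  · rw [SimpleGraph.Walk.support_reverse, List.mem_reverse] at h
    by_cases hzv : z = v
    · exact hzv ▸ hbv
    · exact lt_trans hbv (hintB z h hzb hzv)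

lemma walk_mem_Wc :
    ∀ (k : ℕ) (x y : V) (w : G.Walk x y), w.IsPath → w.length ≤ k →
      (∀ z ∈ w.support, z ≠ x → z ≠ y → L.lt x z) → L.lt x y → 1 ≤ k →
      x ∈ Wc (Sf G L) k y := by
  classical
  letI := L
  intro k
  induction k with
  | zero => intro x y w _ _ _ _ h; omega
  | succ k ih =>
    intro x y w hw hlen hint hxy _
    set T : Finset V := (w.support.toFinset).erase x with hT
    have hyT : y ∈ T := by
      refine Finset.mem_erase.mpr ⟨ne_of_gt hxy, ?_⟩
      simp [List.mem_toFinset, SimpleGraph.Walk.end_mem_support]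
    have hTne : T.Nonempty := ⟨y, hyT⟩
    set z := T.min' hTne with hzdef
    have hzT : z ∈ T := T.min'_mem hTne
    have hzsup : z ∈ w.support := by
      have := Finset.mem_of_mem_erase hzT
      simpa [List.mem_toFinset] using this
    have hzx : z ≠ x := Finset.ne_of_mem_erase hzT
    by_cases hzy : z = y
    · -- direct accessibility
      have hacc : AccessibleInf G L x y := by
        refine ⟨hxy, w, hw, ?_⟩
        intro u hu hux huy
        have huT : u ∈ T := Finset.mem_erase.mpr ⟨hux, by simpa [List.mem_toFinset] using hu⟩
        have : z ≤ u := T.min'_le u huT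
        rw [hzy] at this
        exact lt_of_le_of_ne this (Ne.symm huy)
      exact S_subset_Wc k y ((mem_Sf G L).mpr hacc)
    · have hxz : L.lt x z := hint z hzsup hzx hzy
      have hzy' : L.lt z y := lt_of_le_of_ne (T.min'_le y hyT) hzy
      set w1 := w.takeUntil z hzsup with hw1def
      set w2 := w.dropUntil z hzsup with hw2def
      have hspec : w1.append w2 = w := SimpleGraph.Walk.take_spec w hzsup
      have hlensum : w1.length + w2.length = w.length := by
        rw [← hspec, SimpleGraph.Walk.length_append]
      have hw1p : w1.IsPath := hw.takeUntil hzsup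
      have hw2p : w2.IsPath := hw.dropUntil hzsup
      have hw1pos : 1 ≤ w1.length := by
        by_contra hc
        have h0 : w1.length = 0 := by omega
        exact hzx (SimpleGraph.Walk.eq_of_length_eq_zero h0).symm
      have hw2pos : 1 ≤ w2.length := by
        by_contra hc
        have h0 : w2.length = 0 := by omega
        exact hzy (SimpleGraph.Walk.eq_of_length_eq_zero h0)
      have hxSz : AccessibleInf G L x z := by
        refine ⟨hxz, w1, hw1p, ?_⟩
        intro u hu hux huz
        have husup : u ∈ w.support := SimpleGraph.Walk.support_takeUntil_subset w hzsup hu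
        have huT : u ∈ T := Finset.mem_erase.mpr ⟨hux, by simpa [List.mem_toFinset] using husup⟩
        exact lt_of_le_of_ne (T.min'_le u huT) (Ne.symm huz)
      have hz2 : ∀ u ∈ w2.support, u ≠ z → u ≠ y → L.lt z u := by
        intro u hu huz huy
        have husup : u ∈ w.support := SimpleGraph.Walk.support_dropUntil_subset w hzsup hu
        have hux : u ≠ x := by
          rintro rfl
          have hx1 : u ∈ w1.support := w1.start_mem_support
          have hnd : (w1.append w2).support.Nodup := by
            rw [hspec]; exact hw.support_nodup
          rw [SimpleGraph.Walk.support_append] at hnd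
          have hutail : u ∈ w2.support.tail := by
            have hcons := w2.support_eq_cons
            rw [hcons] at hu
            rcases List.mem_cons.mp hu with h | h
            · exact absurd h huz
            · exact h
          exact (List.disjoint_of_nodup_append hnd) hx1 hutail
        have huT : u ∈ T := Finset.mem_erase.mpr ⟨hux, by simpa [List.mem_toFinset] using husup⟩
        exact lt_of_le_of_ne (T.min'_le u huT) (Ne.symm huz)
      have hlen2 : w2.length ≤ k := by omega
      have h1k : 1 ≤ k := le_trans hw2pos hlen2
      have hzW : z ∈ Wc (Sf G L) k y := ih z y w2 hw2p hlen2 hz2 hzy' h1k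
      exact Wc_step k z y x ((mem_Sf G L).mpr hxSz) hzW

end Lemma16Graph

/-- Lemma 16 (Grohe et al.): if `L` is a linear ordering of the vertices of `G` with
`|R_{L,∞}(y)| ≤ t` for every vertex `y`, then `|Q_{L,k}(y)| ≤ C(k+t, t) - 1` for every positive
`k` and every vertex `y`. -/
theorem ncard_weaklyAccessible_le_of_accessibleInf_le
    [Fintype V] (G : SimpleGraph V) (t : ℕ) (ht : 0 < t) (L : LinearOrder V)
    (hL : ∀ y : V, {x : V | AccessibleInf G L x y}.ncard ≤ t)
    (k : ℕ) (hk : 0 < k) (y : V) :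
    {x : V | WeaklyAccessible G L k x y}.ncard ≤ Nat.choose (k + t) t - 1 := by
  classical
  letI := L
  have hlt : ∀ v x, x ∈ Lemma16Graph.Sf G L v → x < v := fun v x h =>
    Lemma16Graph.Sf_lt G L h
  have hP : ∀ v a b, a ∈ Lemma16Graph.Sf G L v → b ∈ Lemma16Graph.Sf G L v → a < b →
      a ∈ Lemma16Graph.Sf G L b := fun v a b ha hb hab =>
    Lemma16Graph.Sf_P G L ha hb hab
  have hcard : ∀ v, (Lemma16Graph.Sf G L v).card ≤ t := by
    intro v
    have := hL v
    rwa [Set.ncard_eq_toFinset_card _ (Set.toFinite _)] at this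
  have hsub : {x | WeaklyAccessible G L k x y} ⊆ ↑(Lemma16.Wc (Lemma16Graph.Sf G L) k y) := by
    intro x hx
    obtain ⟨hxy, w, hw, hlen, hint⟩ := hx
    exact Lemma16Graph.walk_mem_Wc G L k x y w hw hlen hint hxy hk
  have h1 : {x | WeaklyAccessible G L k x y}.ncard
      ≤ (Lemma16.Wc (Lemma16Graph.Sf G L) k y).card := by
    have h := Set.ncard_le_ncard hsub (Finset.finite_toSet _)
    simpa [Set.ncard_coe_finset] using h
  exact h1.trans (Lemma16.core_card hlt hP hcard k y)
end

section
/- Let k and t be positive integers and let G be a finite simple graph that admits a linear ordering L of its vertex set with |R_{L,∞}(y)| ≤ t for every vertex y (equivalently, col_∞(G) ≤ t+1; for instance, any graph of tree-width at most t). Then dcol_k(G) ≤ t·C(⌊k/2⌋+t, t) + 1, where C(·,·) denotes the binomial coefficient. -/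
open SimpleGraph

variable {V : Type*}

/-!
Write `T x y` for "`x` is `∞`-accessible from `y`". Gluing two witnessing paths at `z` shows that
the back-neighbourhood `{x | T x z}` of every vertex is a `T`-clique, i.e. `T` behaves like a chordal
graph with a perfect elimination ordering, whose back-degrees are at most `t`.

If `x ∈ D_{L,k}(y)`, let `u` be the last vertex of the path below `y`. The rest of the path puts `u`
into `R_{L,∞}(y)`, while the part from `x` to `u` has length at most `⌊k/2⌋` and stays above `x`;
eliminating its peaks with the clique property turns it into a `T`-descending chain from `u` to `x`
of no greater length. So it suffices to bound by `C(r + t, t)` the number of vertices reached from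
one vertex by descending chains of at most `r` steps.

Label each step `v → w` of a chain by the position of `w` among the back-neighbours of `v`. An
exchange argument, again via cliques, shows that every reachable vertex is reached by a chain whose
labels are nondecreasing. Such a chain is determined by its labels, a multiset of size at most `r`
over `t` values, and there are `C(r + t, t)` of those.
-/

open Finset

theorem Nat.one_add_sum_Ico_choose (r m t : ℕ) :
    1 + ∑ a ∈ Ico m t, (r + (t - a)).choose (t - a) = (r + 1 + (t - m)).choose (t - m) := by
  induction hd : t - m generalizing m with
  | zero => simp [Ico_eq_empty_of_le (Nat.sub_eq_zero_iff_le.1 hd)]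
  | succ d ih =>
    rw [sum_eq_sum_Ico_succ_bot (by omega), hd, ← add_assoc, add_comm 1, add_assoc,
      ih (m + 1) (by omega), show r + 1 + (d + 1) = r + d + 1 + 1 by ring,
      Nat.choose_succ_succ', ← add_assoc, add_comm, add_right_comm r 1]

section

variable {T : V → V → Prop}

def DescReach (T : V → V → Prop) : ℕ → V → V → Prop
  | 0, v, x => x = v
  | r + 1, v, x => x = v ∨ ∃ w, T w v ∧ DescReach T r w x

namespace DescReach

theorem refl (r : ℕ) (v : V) : DescReach T r v v := by
  cases r <;> simp [DescReach]

theorem succ {r : ℕ} {v x : V} (h : DescReach T r v x) : DescReach T (r + 1) v x := by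
  induction r generalizing v with
  | zero => exact Or.inl h
  | succ r ih => exact h.imp_right fun ⟨w, hwv, hw⟩ ↦ ⟨w, hwv, ih hw⟩

theorem mono {r r' : ℕ} {v x : V} (hr : r ≤ r') (h : DescReach T r v x) : DescReach T r' v x := by
  induction hr with
  | refl => exact h
  | step _ ih => exact ih.succ

end DescReach

open scoped Classical in
noncomputable def backNbhd [Fintype V] (T : V → V → Prop) (v : V) : Finset V := {z | T z v}

@[simp]
theorem mem_backNbhd [Fintype V] {v z : V} : z ∈ backNbhd T v ↔ T z v := by
  simp [backNbhd]

variable [LinearOrder V]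

/-- `T x y` reads "`x` is a back-neighbour of `y`": back-neighbourhoods are `T`-cliques, as in a
perfect elimination ordering of a chordal graph. -/
structure IsPerfectElimination (T : V → V → Prop) : Prop where
  lt_of_rel {x y : V} : T x y → x < y
  rel_of_rel_of_lt {x y z : V} : T x z → T y z → x < y → T x y

/-- Compare `u` with the next vertex of the chain from `c`: both lie in the clique `{z | T z c}`. -/
theorem DescReach.of_rel (hT : IsPerfectElimination T) {m : ℕ} {u c x : V} (hxu : x ≤ u)
    (huc : T u c) (h : DescReach T m c x) : DescReach T m u x := by
  induction m generalizing c u with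
  | zero => exact absurd (hT.lt_of_rel (h ▸ huc)) hxu.not_gt
  | succ m ih =>
    rcases h with rfl | ⟨d, hdc, hd⟩
    · exact absurd (hT.lt_of_rel huc) hxu.not_gt
    rcases lt_trichotomy u d with hud | rfl | hdu
    · exact (ih hxu (hT.rel_of_rel_of_lt huc hdc hud) hd).succ
    · exact hd.succ
    · exact Or.inr ⟨d, hT.rel_of_rel_of_lt hdc huc hdu, hd⟩

theorem DescReach.of_walk {G : SimpleGraph V} (hT : IsPerfectElimination T)
    (hG : ∀ a b, G.Adj a b → a < b → T a b) {u x : V} (p : G.Walk u x)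
    (hp : ∀ z ∈ p.support, x ≤ z) : DescReach T p.length u x := by
  induction p with
  | nil => exact DescReach.refl 0 _
  | @cons u b x hub p ih =>
    have ih := ih fun z hz ↦ hp z (List.mem_cons_of_mem u hz)
    rcases hub.ne.lt_or_gt with hlt | hgt
    · exact (ih.of_rel hT (hp u p.support.mem_cons_self) (hG u b hub hlt)).succ
    · exact Or.inr ⟨b, hG b u hub.symm hgt, ih⟩

variable [Fintype V]

open scoped Classical in
noncomputable def backIdx (T : V → V → Prop) (v w : V) : ℕ := #{z ∈ backNbhd T v | z < w}

noncomputable def MonoReach (T : V → V → Prop) : ℕ → ℕ → V → V → Prop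
  | 0, _, v, x => x = v
  | r + 1, m, v, x => x = v ∨ ∃ w, T w v ∧ m ≤ backIdx T v w ∧ MonoReach T r (backIdx T v w) w x

theorem backIdx_lt_card_backNbhd {v w : V} (hw : T w v) : backIdx T v w < #(backNbhd T v) := by
  classical
  refine card_lt_card ⟨filter_subset _ _, fun h ↦ ?_⟩
  simpa using h (mem_backNbhd.2 hw)

theorem backIdx_strictMonoOn (v : V) : StrictMonoOn (backIdx T v) {w | T w v} := by
  classical
  intro u hu w hw huw
  refine card_lt_card ⟨monotone_filter_right _ fun z _ hz ↦ hz.trans huw, fun h ↦ ?_⟩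
  simpa using h (mem_filter.2 ⟨mem_backNbhd.2 hu, huw⟩)

/-- Take for `q` the least element of `backNbhd T v` above `u`. -/
theorem exists_backIdx_le (hT : IsPerfectElimination T) {v w u : V} (hwv : T w v) (huw : T u w)
    (huv : ¬ T u v) : ∃ q, T q v ∧ T u q ∧ backIdx T v q ≤ backIdx T w u := by
  classical
  have hS : ({z ∈ backNbhd T v | u < z} : Finset V).Nonempty :=
    ⟨w, mem_filter.2 ⟨mem_backNbhd.2 hwv, hT.lt_of_rel huw⟩⟩
  set q := min' _ hS
  obtain ⟨hqv, huq⟩ := mem_filter.1 (min'_mem _ hS)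
  have hq_min : ∀ z, T z v → u < z → q ≤ z := fun z hz huz ↦
    min'_le _ _ (mem_filter.2 ⟨mem_backNbhd.2 hz, huz⟩)
  rw [mem_backNbhd] at hqv
  refine ⟨q, hqv, ?_, card_le_card fun z hz ↦ ?_⟩
  · rcases (hq_min w hwv (hT.lt_of_rel huw)).lt_or_eq with hqw | hqw
    · exact hT.rel_of_rel_of_lt huw (hT.rel_of_rel_of_lt hqv hwv hqw) huq
    · exact hqw ▸ huw
  · obtain ⟨hzv, hzq⟩ := mem_filter.1 hz
    rw [mem_backNbhd] at hzv
    have hzu : z < u := by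
      rcases lt_trichotomy z u with h | rfl | h
      exacts [h, absurd hzv huv, absurd (hq_min z hzv h) hzq.not_ge]
    exact mem_filter.2 ⟨mem_backNbhd.2
      (hT.rel_of_rel_of_lt hzv hwv (hzu.trans (hT.lt_of_rel huw))), hzu⟩

namespace MonoReach

theorem refl (r m : ℕ) (v : V) : MonoReach T r m v v := by
  cases r <;> simp [MonoReach]

theorem succ {r m : ℕ} {v x : V} (h : MonoReach T r m v x) : MonoReach T (r + 1) m v x := by
  induction r generalizing m v with
  | zero => exact Or.inl h
  | succ r ih => exact h.imp_right fun ⟨w, hwv, hm, hw⟩ ↦ ⟨w, hwv, hm, ih hw⟩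

theorem of_le {r m m' : ℕ} {v x : V} (hm : m' ≤ m) (h : MonoReach T r m v x) :
    MonoReach T r m' v x := by
  cases r with
  | zero => exact h
  | succ r => exact h.imp_right fun ⟨w, hwv, hmw, hw⟩ ↦ ⟨w, hwv, hm.trans hmw, hw⟩

/-- Unless the chain from `w` already starts with an index at least `backIdx T v w`, a shortcut or
the exchange step `exists_backIdx_le` replaces `w` by an element of `backNbhd T v` of smaller index. -/
theorem exists_cons (hT : IsPerfectElimination T) {r : ℕ} {v w x : V} (hwv : T w v)
    (h : MonoReach T r 0 w x) : ∃ w', T w' v ∧ MonoReach T r (backIdx T v w') w' x := by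
  induction r generalizing v w with
  | zero => exact ⟨w, hwv, h⟩
  | succ r ihr =>
    induction hn : backIdx T v w using Nat.strong_induction_on generalizing w with
    | _ n ihn =>
    rcases h with rfl | ⟨u, huw, -, hu⟩
    · exact ⟨_, hwv, refl _ _ _⟩
    by_cases hle : backIdx T v w ≤ backIdx T w u
    · exact ⟨w, hwv, Or.inr ⟨u, huw, hle, hu⟩⟩
    obtain ⟨q, hqv, hlt, hq⟩ : ∃ q, T q v ∧ backIdx T v q < n ∧ MonoReach T (r + 1) 0 q x := by
      by_cases huv : T u v
      · exact ⟨u, huv, hn ▸ backIdx_strictMonoOn v huv hwv (hT.lt_of_rel huw),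
          (hu.of_le (Nat.zero_le _)).succ⟩
      obtain ⟨q, hqv, huq, hqu⟩ := exists_backIdx_le hT hwv huw huv
      obtain ⟨u', hu'q, hu'⟩ := ihr huq (hu.of_le (Nat.zero_le _))
      exact ⟨q, hqv, by omega, Or.inr ⟨u', hu'q, Nat.zero_le _, hu'⟩⟩
    exact ihn _ hlt hqv hq rfl

theorem of_descReach (hT : IsPerfectElimination T) {r : ℕ} {v x : V} (h : DescReach T r v x) :
    MonoReach T r 0 v x := by
  induction r generalizing v with
  | zero => exact h
  | succ r ih =>
    rcases h with rfl | ⟨w, hwv, hw⟩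
    · exact Or.inl rfl
    obtain ⟨w', hw'v, hw'⟩ := exists_cons hT hwv (ih hw)
    exact Or.inr ⟨w', hw'v, Nat.zero_le _, hw'⟩

open scoped Classical in
theorem card_le {t : ℕ} (hdeg : ∀ v, #(backNbhd T v) ≤ t) (r m : ℕ) (v : V) :
    #{x | MonoReach T r m v x} ≤ (r + (t - m)).choose (t - m) := by
  induction r generalizing m v with
  | zero =>
    rw [Nat.zero_add, Nat.choose_self]
    exact card_le_one.2 fun a ha b hb ↦
      ((mem_filter.1 ha).2 : a = v).trans (mem_filter.1 hb).2.symm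
  | succ r ih =>
    set B : Finset V := {w ∈ backNbhd T v | m ≤ backIdx T v w}
    have hsub : ({x | MonoReach T (r + 1) m v x} : Finset V) ⊆
        insert v (B.biUnion fun w ↦ {x | MonoReach T r (backIdx T v w) w x}) := by
      intro x hx
      rcases (mem_filter.1 hx).2 with rfl | ⟨w, hwv, hmw, hw⟩
      · exact mem_insert_self _ _
      · exact mem_insert_of_mem (mem_biUnion.2 ⟨w, by simp [B, hwv, hmw], by simpa using hw⟩)
    have himage : B.image (backIdx T v) ⊆ Ico m t := fun a ha ↦ by
      obtain ⟨w, hw, rfl⟩ := mem_image.1 ha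
      obtain ⟨hwv, hmw⟩ := mem_filter.1 hw
      exact mem_Ico.2 ⟨hmw, (backIdx_lt_card_backNbhd (mem_backNbhd.1 hwv)).trans_le (hdeg v)⟩
    have hinj : Set.InjOn (backIdx T v) B :=
      (backIdx_strictMonoOn v).injOn.mono fun w hw ↦ by simpa [B] using (mem_filter.1 hw).1
    calc #{x | MonoReach T (r + 1) m v x}
        ≤ 1 + ∑ w ∈ B, #{x | MonoReach T r (backIdx T v w) w x} := by
          grw [card_le_card hsub, card_insert_le, card_biUnion_le, add_comm]
      _ ≤ 1 + ∑ w ∈ B, (r + (t - backIdx T v w)).choose (t - backIdx T v w) := by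
          grw [sum_le_sum fun w _ ↦ ih _ w]
      _ ≤ 1 + ∑ a ∈ Ico m t, (r + (t - a)).choose (t - a) := by
          rw [← sum_image (f := fun a ↦ (r + (t - a)).choose (t - a)) hinj]
          grw [sum_le_sum_of_subset himage]
      _ = (r + 1 + (t - m)).choose (t - m) := Nat.one_add_sum_Ico_choose r m t

end MonoReach

open scoped Classical in
theorem DescReach.card_le (hT : IsPerfectElimination T) {t : ℕ} (hdeg : ∀ v, #(backNbhd T v) ≤ t)
    (r : ℕ) (v : V) : #{x | DescReach T r v x} ≤ (r + t).choose t := by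
  calc #{x | DescReach T r v x} ≤ #{x | MonoReach T r 0 v x} :=
        card_le_card (monotone_filter_right _ fun _ _ ↦ MonoReach.of_descReach hT)
    _ ≤ (r + t).choose t := by simpa using MonoReach.card_le hdeg r 0 v

end

namespace SimpleGraph.Walk

theorem exists_eq_append_of_exists_not {G : SimpleGraph V} {P : V → Prop} {a b : V}
    (p : G.Walk a b) (h : ∃ z ∈ p.support, ¬ P z) :
    ∃ u, ¬ P u ∧ ∃ (q : G.Walk a u) (s : G.Walk u b), p = q.append s ∧ ∀ z ∈ s.support.tail, P z := by
  induction p with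
  | nil =>
    obtain ⟨z, hz, hPz⟩ := h
    rw [support_nil, List.mem_singleton] at hz
    exact ⟨_, hz ▸ hPz, nil, nil, rfl, by simp⟩
  | @cons a c b hac p ih =>
    by_cases hp : ∃ z ∈ p.support, ¬ P z
    · obtain ⟨u, hu, q, s, rfl, hs⟩ := ih hp
      exact ⟨u, hu, cons hac q, s, (cons_append _ _ _).symm, hs⟩
    · push Not at hp
      obtain ⟨z, hz, hPz⟩ := h
      have hza : z = a := by
        rcases List.mem_cons.1 (support_cons hac p ▸ hz) with rfl | hz
        exacts [rfl, absurd (hp z hz) hPz]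
      exact ⟨a, hza ▸ hPz, nil, cons hac p, rfl, hp⟩

end SimpleGraph.Walk

section

variable {G : SimpleGraph V} [L : LinearOrder V]

theorem accessibleInf_of_adj {x y : V} (hxy : G.Adj x y) (hlt : x < y) : AccessibleInf G L x y :=
  ⟨hlt, hxy.toWalk, by simp [hxy.ne], by simp +contextual⟩

/-- Join the two witnessing paths at `z`: their vertices other than `x` and `y` lie above `z > y`. -/
theorem accessibleInf_of_accessibleInf {x y z : V} (hxz : AccessibleInf G L x z)
    (hyz : AccessibleInf G L y z) (hxy : x < y) : AccessibleInf G L x y := by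
  classical
  obtain ⟨-, p, -, hp⟩ := hxz
  obtain ⟨hyz, q, -, hq⟩ := hyz
  have above : ∀ (a : V) (r : G.Walk a z), (∀ w ∈ r.support, w ≠ a → w ≠ z → z < w) →
      ∀ w ∈ r.support, w ≠ a → y < w := fun a r hr w hw hwa ↦ by
    rcases eq_or_ne w z with rfl | hwz
    exacts [hyz, hyz.trans (hr w hw hwa hwz)]
  refine ⟨hxy, (p.append q.reverse).bypass, Walk.bypass_isPath _, fun w hw hwx hwy ↦ ?_⟩
  rcases (Walk.mem_support_append_iff _ _).1 (Walk.support_bypass_subset_support _ hw) with h | h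
  · exact above x p hp w h hwx
  · exact above y q hq w (by simpa using h) hwy

theorem isPerfectElimination_accessibleInf : IsPerfectElimination (AccessibleInf G L) :=
  ⟨fun h ↦ h.1, accessibleInf_of_accessibleInf⟩

theorem DAccessible.exists_descReach {k : ℕ} {x y : V} (h : DAccessible G L k x y) :
    ∃ u, AccessibleInf G L u y ∧ DescReach (AccessibleInf G L) (k / 2) u x := by
  obtain ⟨hxy, p, hp, -, hmin, hfar⟩ := h
  have hxy : x < y := (hmin y p.end_mem_support).lt_of_ne hxy
  obtain ⟨u, huy, q, s, rfl, hs⟩ :=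
    p.exists_eq_append_of_exists_not (P := (y ≤ ·)) ⟨x, p.start_mem_support, not_le.2 hxy⟩
  refine ⟨u, ⟨lt_of_not_ge huy, s, hp.of_append_right, fun z hz hzu hzy ↦ ?_⟩, ?_⟩
  · rw [← Walk.cons_tail_support, List.mem_cons] at hz
    exact (hs z (hz.resolve_left hzu)).lt_of_ne' hzy
  · have hq : q.length ≤ k / 2 := by
      by_contra! hlong
      have hyu := hfar q.length hlong (by simp [Walk.length_append])
      exact huy (by simpa [Walk.getVert_append] using hyu)
    have := DescReach.of_walk isPerfectElimination_accessibleInf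
      (fun _ _ ↦ accessibleInf_of_adj) q.reverse fun z hz ↦
        hmin z ((Walk.mem_support_append_iff _ _).2 (Or.inl (by simpa using hz)))
    exact (Walk.length_reverse q ▸ this).mono hq

theorem ncard_dAccessible_le [Fintype V] {k t : ℕ}
    (hL : ∀ y, {x | AccessibleInf G L x y}.ncard ≤ t) (y : V) :
    {x | DAccessible G L k x y}.ncard ≤ t * (k / 2 + t).choose t := by
  classical
  have hdeg : ∀ v, #(backNbhd (AccessibleInf G L) v) ≤ t := fun v ↦ by
    simpa [Set.ncard_eq_toFinset_card', backNbhd] using hL v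
  calc {x | DAccessible G L k x y}.ncard
      ≤ #((backNbhd (AccessibleInf G L) y).biUnion
          fun u ↦ {x | DescReach (AccessibleInf G L) (k / 2) u x}) := by
        rw [← Set.ncard_coe_finset]
        refine Set.ncard_le_ncard (fun x hx ↦ ?_)
        obtain ⟨u, hu, hux⟩ := DAccessible.exists_descReach hx
        simpa using ⟨u, hu, hux⟩
    _ ≤ #(backNbhd (AccessibleInf G L) y) * (k / 2 + t).choose t :=
        card_biUnion_le_card_mul _ _ _ fun u _ ↦
          DescReach.card_le isPerfectElimination_accessibleInf hdeg _ u
    _ ≤ t * (k / 2 + t).choose t := Nat.mul_le_mul_right _ (hdeg y)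

end

theorem dcol_le_of_accessibleInf_le_general
    [Fintype V] (G : SimpleGraph V) (k t : ℕ)
    (hG : ∃ L : LinearOrder V, ∀ y : V, {x : V | AccessibleInf G L x y}.ncard ≤ t) :
    dcol G k ≤ t * Nat.choose (k / 2 + t) t + 1 := by
  obtain ⟨L, hL⟩ := hG
  have hmem : t * (k / 2 + t).choose t ∈
      {m | ∃ L : LinearOrder V, ∀ y, {x | DAccessible G L k x y}.ncard ≤ m} :=
    ⟨L, ncard_dAccessible_le hL⟩
  rw [dcol, add_comm]
  exact Nat.add_le_add_right (Nat.sInf_le hmem) 1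

/-- Theorem 9: if `G` admits a linear ordering `L` with `|R_{L,∞}(y)| ≤ t` for every vertex `y`
(e.g. any graph of tree-width at most `t`), then `dcol_k(G) ≤ t·C(⌊k/2⌋+t, t) + 1`. -/
theorem dcol_le_of_accessibleInf_le
    [Fintype V] (G : SimpleGraph V) (k t : ℕ) (hk : 0 < k) (ht : 0 < t)
    (hG : ∃ L : LinearOrder V, ∀ y : V, {x : V | AccessibleInf G L x y}.ncard ≤ t) :
    dcol G k ≤ t * Nat.choose (k / 2 + t) t + 1 :=
  dcol_le_of_accessibleInf_le_general G k t hG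
end

section
/- For integers n, p ≥ 2, let S_{n,p} be the (p−1)-subdivision of the complete graph K_n, i.e. the graph obtained from K_n by replacing every edge by a path of length p through p−1 new internal vertices (the original vertices of K_n are called branch vertices). Then the exact distance-p graph of S_{n,p} satisfies χ(S_{n,p}^[♮p]) ≥ n, while the weak (p−1)-colouring number satisfies wcol_{p−1}(S_{n,p}) ≤ p+1. -/
open SimpleGraph

variable {V : Type*}

/-- The vertex type of the `(p-1)`-subdivision of `K_n`: the `n` branch vertices together with,
for each edge `{i,j}` (with `i < j`) of `K_n`, the `p-1` internal vertices of the path replacing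
that edge. -/
abbrev SubdivisionVert (n p : ℕ) : Type :=
  Fin n ⊕ ({e : Fin n × Fin n // e.1 < e.2} × Fin (p - 1))

/-- The `(p-1)`-subdivision `S_{n,p}` of `K_n`: every edge `{i,j}` of `K_n` is replaced by the
path `i, (e,0), (e,1), …, (e,p-2), j` of length `p`. -/
def subdividedComplete (n p : ℕ) : SimpleGraph (SubdivisionVert n p) :=
  SimpleGraph.fromRel (fun a b =>
    match a, b with
    | Sum.inl i, Sum.inr em =>
        (em.1.val.1 = i ∧ (em.2 : ℕ) = 0) ∨ (em.1.val.2 = i ∧ (em.2 : ℕ) = p - 2)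
    | Sum.inr em, Sum.inr em' => em.1 = em'.1 ∧ (em'.2 : ℕ) = (em.2 : ℕ) + 1
    | _, _ => False)

/-!
Any two branch vertices of `S_{n,p}` are at distance exactly `p`, so they span a copy of `K_n`
in the exact distance-`p` graph. For the weak colouring number, order all branch vertices before
all subdivision vertices. Then a branch vertex weakly `(p-1)`-reaches nothing, and a subdivision
vertex on the path replacing `ij` weakly reaches only `i`, `j` and vertices of that same path,
because every other route has to pass through a (smaller) branch vertex. Both distance facts
follow from the distance to a branch vertex truncated at `p`, which changes by at most one along
every edge.
-/

namespace SimpleGraph.Walk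

variable {G : SimpleGraph V} {u v : V}

theorem le_add_length_of_adj {f : V → ℕ} (hf : ∀ a b, G.Adj a b → f b ≤ f a + 1)
    (w : G.Walk u v) : f v ≤ f u + w.length := by
  induction w with
  | nil => simp
  | cons hadj _ ih =>
    have := hf _ _ hadj
    rw [length_cons]
    omega

theorem mem_of_forall_mem_support {S P : Set V}
    (hS : ∀ a b, G.Adj a b → a ∈ S → b ∈ P → b ∈ S)
    (w : G.Walk u v) (hu : u ∈ S) (hw : ∀ z ∈ w.support, z ∈ P) : v ∈ S := by
  induction w with
  | nil => exact hu
  | cons hadj _ ih =>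
    exact ih (hS _ _ hadj hu (hw _ (by simp))) fun z hz => hw z (by simp [hz])

end SimpleGraph.Walk

theorem wcol_le_of_forall_ncard_le {G : SimpleGraph V} {k m : ℕ} (L : LinearOrder V)
    (h : ∀ y, {x | WeaklyAccessible G L k x y}.ncard ≤ m) : wcol G k ≤ m + 1 := by
  rw [wcol, add_comm]
  gcongr
  exact Nat.sInf_le ⟨L, h⟩

theorem exists_linearOrder_inl_lt_inr (α β : Type*) [Countable α] [Countable β] :
    ∃ L : LinearOrder (α ⊕ β), ∀ a b, L.lt (Sum.inl a) (Sum.inr b) := by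
  obtain ⟨f, hf⟩ := exists_injective_nat α
  obtain ⟨g, hg⟩ := exists_injective_nat β
  exact ⟨LinearOrder.lift' (fun v => toLex (Sum.map f g v) : α ⊕ β → ℕ ⊕ₗ ℕ)
    (toLex.injective.comp (Sum.map_injective.2 ⟨hf, hg⟩)), fun a b => Sum.Lex.inl_lt_inr _ _⟩

namespace subdividedComplete

open Sum

variable {n p : ℕ}

theorem not_adj_inl_inl (i j : Fin n) :
    ¬ (subdividedComplete n p).Adj (inl i) (inl j) := by
  simp [subdividedComplete]

theorem adj_inl_inr {i : Fin n} {e : {e : Fin n × Fin n // e.1 < e.2}}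
    {m : Fin (p - 1)} :
    (subdividedComplete n p).Adj (inl i) (inr (e, m)) ↔
      (e.1.1 = i ∧ (m : ℕ) = 0) ∨ (e.1.2 = i ∧ (m : ℕ) = p - 2) := by
  simp [subdividedComplete]

theorem adj_inr_inr {e e' : {e : Fin n × Fin n // e.1 < e.2}}
    {m m' : Fin (p - 1)} :
    (subdividedComplete n p).Adj (inr (e, m)) (inr (e', m')) ↔
      e = e' ∧ ((m' : ℕ) = m + 1 ∨ (m : ℕ) = m' + 1) := by
  simp only [subdividedComplete, fromRel_adj, ne_eq, inr.injEq, Prod.mk.injEq, Fin.ext_iff]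
  constructor
  · rintro ⟨-, ⟨rfl, h⟩ | ⟨rfl, h⟩⟩ <;> simp [h]
  · rintro ⟨rfl, h⟩
    simp only [true_and]
    omega

-- The distance from the branch vertex `i`, truncated at `p`.
def truncBranchDist (p : ℕ) (i : Fin n) : SubdivisionVert n p → ℕ
  | inl j => if j = i then 0 else p
  | inr (e, m) => if e.1.1 = i then m + 1 else if e.1.2 = i then p - 1 - m else p

theorem truncBranchDist_le_of_adj (i : Fin n) {a b : SubdivisionVert n p}
    (h : (subdividedComplete n p).Adj a b) :
    truncBranchDist p i b ≤ truncBranchDist p i a + 1 := by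
  rcases a with j | ⟨e, m⟩ <;> rcases b with j' | ⟨e', m'⟩
  · exact absurd h (not_adj_inl_inl j j')
  · rw [adj_inl_inr] at h
    have := e'.2
    simp only [truncBranchDist]
    split_ifs <;> grind
  · rw [adj_comm, adj_inl_inr] at h
    have := e.2
    simp only [truncBranchDist]
    split_ifs <;> grind
  · obtain ⟨rfl, h⟩ := adj_inr_inr.1 h
    simp only [truncBranchDist]
    split_ifs <;> omega

theorem le_length_of_walk_inl_inl {i j : Fin n} (hij : i ≠ j)
    (w : (subdividedComplete n p).Walk (inl i) (inl j)) : p ≤ w.length := by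
  have := w.le_add_length_of_adj fun _ _ => truncBranchDist_le_of_adj i
  simpa [truncBranchDist, hij.symm] using this

theorem eq_or_eq_of_walk_inl_inr {i : Fin n} {e : {e : Fin n × Fin n // e.1 < e.2}}
    {m : Fin (p - 1)} (w : (subdividedComplete n p).Walk (inl i) (inr (e, m)))
    (hw : w.length < p) : e.1.1 = i ∨ e.1.2 = i := by
  have := w.le_add_length_of_adj fun _ _ => truncBranchDist_le_of_adj i
  simp only [truncBranchDist] at this
  split_ifs at this with h₁ h₂
  exacts [.inl h₁, .inr h₂, by omega]

theorem exists_walk_inl_inr_length_eq (e : {e : Fin n × Fin n // e.1 < e.2}) (k : ℕ)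
    (hk : k < p - 1) :
    ∃ w : (subdividedComplete n p).Walk (inl e.1.1) (inr (e, ⟨k, hk⟩)), w.length = k + 1 := by
  induction k with
  | zero => exact ⟨(adj_inl_inr.2 (.inl ⟨rfl, rfl⟩)).toWalk, rfl⟩
  | succ k ih =>
    obtain ⟨w, hw⟩ := ih (by omega)
    exact ⟨w.concat (adj_inr_inr.2 ⟨rfl, .inl rfl⟩),
      by rw [Walk.length_concat, hw]⟩

theorem exists_walk_inl_inl_length_eq (hp : 2 ≤ p) (e : {e : Fin n × Fin n // e.1 < e.2}) :
    ∃ w : (subdividedComplete n p).Walk (inl e.1.1) (inl e.1.2), w.length = p := by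
  obtain ⟨w, hw⟩ := exists_walk_inl_inr_length_eq (p := p) e (p - 2) (by omega)
  exact ⟨w.concat (adj_inl_inr.2 (.inr ⟨rfl, rfl⟩)).symm,
    by rw [Walk.length_concat, hw]; omega⟩

theorem exactDistanceGraph_adj_inl_inl (hp : 2 ≤ p) {i j : Fin n}
    (hij : i ≠ j) : (exactDistanceGraph (subdividedComplete n p) p).Adj (inl i) (inl j) := by
  wlog hlt : i < j
  · exact (this hp hij.symm (hij.lt_or_gt.resolve_left hlt)).symm
  obtain ⟨w, hw⟩ := exists_walk_inl_inl_length_eq hp ⟨(i, j), hlt⟩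
  obtain ⟨w', hw'⟩ := w.reachable.exists_walk_length_eq_dist
  exact ⟨inl_injective.ne hij, w.reachable,
    le_antisymm ((dist_le w).trans hw.le) (hw' ▸ le_length_of_walk_inl_inl hij w')⟩

theorem le_chromaticNumber_exactDistanceGraph (hp : 2 ≤ p) :
    (n : ℕ∞) ≤ (exactDistanceGraph (subdividedComplete n p) p).chromaticNumber := by
  let f : (⊤ : SimpleGraph (Fin n)) →g exactDistanceGraph (subdividedComplete n p) p :=
    ⟨inl, exactDistanceGraph_adj_inl_inl hp⟩
  simpa using chromaticNumber_mono_of_hom f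

def edgePath (p : ℕ) (e : {e : Fin n × Fin n // e.1 < e.2}) : Set (SubdivisionVert n p) :=
  {inl e.1.1, inl e.1.2} ∪ Set.range fun m => inr (e, m)

theorem ncard_edgePath_le (hp : 0 < p) (e : {e : Fin n × Fin n // e.1 < e.2}) :
    (edgePath p e).ncard ≤ p + 1 := by
  calc (edgePath p e).ncard
      ≤ ({inl e.1.1, inl e.1.2} : Set (SubdivisionVert n p)).ncard +
          (Set.range fun m : Fin (p - 1) => (inr (e, m) : SubdivisionVert n p)).ncard :=
        Set.ncard_union_le _ _
    _ = 2 + (p - 1) := by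
        rw [Set.ncard_pair (inl_injective.ne e.2.ne),
          Set.ncard_range_of_injective fun _ _ h => by simpa using h, Nat.card_fin]
    _ ≤ p + 1 := by omega

section BranchVerticesFirst

-- `SubdivisionVert n p` already carries the sum order as an instance, so the order facts about
-- `L` below name its preorder explicitly.
variable (L : LinearOrder (SubdivisionVert n p)) (hL : ∀ i x, L.lt (inl i) (inr x))
include hL

theorem not_weaklyAccessible_inl (hp : 0 < p) (x : SubdivisionVert n p) (j : Fin n) :
    ¬ WeaklyAccessible (subdividedComplete n p) L (p - 1) x (inl j) := by
  rintro ⟨hlt, w, -, hlen, -⟩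
  rcases x with i | x
  · have hij : i ≠ j := inl_injective.ne_iff.1 (@ne_of_lt _ L.toPreorder _ _ hlt)
    have := le_length_of_walk_inl_inl hij w
    omega
  · exact @lt_asymm _ L.toPreorder _ _ hlt (hL j x)

theorem weaklyAccessible_inr_subset (e : {e : Fin n × Fin n // e.1 < e.2}) (m : Fin (p - 1)) :
    {x | WeaklyAccessible (subdividedComplete n p) L (p - 1) x (inr (e, m))} ⊆
      edgePath p e \ {inr (e, m)} := by
  rintro x ⟨hlt, w, -, hlen, hmid⟩
  refine ⟨?_, @ne_of_lt _ L.toPreorder _ _ hlt⟩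
  rcases x with i | ⟨e', m'⟩
  · rcases eq_or_eq_of_walk_inl_inr w (by have := m.isLt; omega) with h | h <;>
      simp [edgePath, h]
  · -- the inner vertices of `w` lie above `x` in `L`, so none of them is a branch vertex
    have hsupp : ∀ z ∈ w.support, z ∈ Set.range inr := by
      rintro (i | z) hz
      · exact absurd (hmid _ hz (by simp) (by simp)) (@lt_asymm _ L.toPreorder _ _ (hL i _))
      · exact ⟨z, rfl⟩
    have hclosed : ∀ a b, (subdividedComplete n p).Adj a b →
        a ∈ (Set.range fun m'' => inr (e', m'')) → b ∈ Set.range inr →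
        b ∈ (Set.range fun m'' => inr (e', m'')) := by
      rintro _ _ hadj ⟨_, rfl⟩ ⟨⟨_, m''⟩, rfl⟩
      obtain ⟨rfl, -⟩ := adj_inr_inr.1 hadj
      exact ⟨m'', rfl⟩
    obtain ⟨_, h⟩ := w.mem_of_forall_mem_support hclosed ⟨m', rfl⟩ hsupp
    obtain ⟨rfl, -⟩ := Prod.mk.inj (inr_injective h)
    exact .inr ⟨m', rfl⟩

theorem ncard_weaklyAccessible_le (hp : 0 < p) (y : SubdivisionVert n p) :
    {x | WeaklyAccessible (subdividedComplete n p) L (p - 1) x y}.ncard ≤ p := by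
  rcases y with j | ⟨e, m⟩
  · simp [not_weaklyAccessible_inl L hL hp]
  calc _ ≤ (edgePath p e \ {inr (e, m)}).ncard :=
        Set.ncard_le_ncard (weaklyAccessible_inr_subset L hL e m)
    _ = (edgePath p e).ncard - 1 := Set.ncard_sdiff_singleton_of_mem (.inr ⟨m, rfl⟩)
    _ ≤ p := by have := ncard_edgePath_le hp e; omega

end BranchVerticesFirst

theorem wcol_le (hp : 0 < p) :
    wcol (subdividedComplete n p) (p - 1) ≤ p + 1 := by
  obtain ⟨L, hL⟩ :=
    exists_linearOrder_inl_lt_inr (Fin n) ({e : Fin n × Fin n // e.1 < e.2} × Fin (p - 1))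
  exact wcol_le_of_forall_ncard_le L (ncard_weaklyAccessible_le L hL hp)

end subdividedComplete

theorem subdividedComplete_chromaticNumber_ge_and_wcol_le_general
    (n p : ℕ) (hp : 2 ≤ p) :
    (n : ℕ∞) ≤ (exactDistanceGraph (subdividedComplete n p) p).chromaticNumber ∧
      wcol (subdividedComplete n p) (p - 1) ≤ p + 1 :=
  ⟨subdividedComplete.le_chromaticNumber_exactDistanceGraph hp,
    subdividedComplete.wcol_le (by omega)⟩

/-- For `n, p ≥ 2`, the exact distance-`p` graph of `S_{n,p}` has chromatic number at least `n`,
while `wcol_{p-1}(S_{n,p}) ≤ p + 1`. -/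
theorem subdividedComplete_chromaticNumber_ge_and_wcol_le
    (n p : ℕ) (hn : 2 ≤ n) (hp : 2 ≤ p) :
    (n : ℕ∞) ≤ (exactDistanceGraph (subdividedComplete n p) p).chromaticNumber ∧
      wcol (subdividedComplete n p) (p - 1) ≤ p + 1 :=
  subdividedComplete_chromaticNumber_ge_and_wcol_le_general n p hp
end
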